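/- arXiv:1201.3377 — 5 statements merged into one kernel-verified Lean document; each statement's English description precedes it below -/
import Mathlib

section
/- Let P be a finite poset with a strictly order-preserving function ρ : P → ℕ, and let ζ̄ be a function in the incidence algebra of P with ζ̄(x,x) = 1 for all x. If the values ζ̄(x,z) are fixed arbitrarily for all x < z with ρ(z) − ρ(x) odd, then there is a unique extension of ζ̄ to pairs with even rank difference, given by ζ̄(x,z) = −(1/2)·∑_{x<y<z} (−1)^{ρ(y)−ρ(x)}·ζ̄(x,y)·ζ̄(y,z), making (P,ρ,ζ̄) an Eulerian quasi-graded poset. -/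
open scoped Classical
open Finset

noncomputable section

/-- The free noncommutative algebra `ℚ⟨a,b⟩`. -/
abbrev QA : Type := FreeAlgebra ℚ Bool

/-- The variable `a`. -/
def av : QA := FreeAlgebra.ι ℚ true

/-- The variable `b`. -/
def bv : QA := FreeAlgebra.ι ℚ false

/-- `c = a + b`. -/
def cvar : QA := av + bv

/-- `d = ab + ba`. -/
def dvar : QA := av * bv + bv * av

variable {α : Type*}

/-- The `ζ̄`-weight of a chain encoded as `f : Fin (k+1) → α`:
the product of the values of `ζ̄` on consecutive elements. -/
def chainZeta (ζ : α → α → ℚ) {k : ℕ} (f : Fin (k + 1) → α) : ℚ :=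
  (List.ofFn (fun i : Fin k => ζ (f i.castSucc) (f i.succ))).prod

/-- The `ab`-weight of a chain: `(a-b)^{g₁-1} · b · (a-b)^{g₂-1} · b ⋯ b · (a-b)^{g_k-1}`
where `gᵢ` are the successive rank gaps along the chain. -/
def chainWt (ρ : α → ℕ) {k : ℕ} (f : Fin (k + 1) → α) : QA :=
  (List.ofFn (fun i : Fin k =>
    (if (i : ℕ) = 0 then 1 else bv) *
      (av - bv) ^ (ρ (f i.succ) - ρ (f i.castSucc) - 1))).prod

/-- `f` encodes a (strict) chain from `x` to `z`. -/
def IsChainFrom [PartialOrder α] {k : ℕ} (f : Fin (k + 1) → α) (x z : α) : Prop :=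
  StrictMono f ∧ f 0 = x ∧ f (Fin.last k) = z

/-- The ab-index `Ψ` of the interval `[x,z]` of a quasi-graded poset:
the sum over all chains from `x` to `z` of `ζ̄(c) · wt(c)`. -/
def abIndex [PartialOrder α] [Fintype α] (ρ : α → ℕ) (ζ : α → α → ℚ) (x z : α) : QA :=
  ∑ k ∈ Finset.range (Fintype.card α), ∑ f : Fin (k + 1) → α,
    if IsChainFrom f x z then chainZeta ζ f • chainWt ρ f else 0

/-- `(P,ρ,ζ̄)` is a quasi-graded poset: `ρ` is strictly order-preserving and `ζ̄`
is an element of the incidence algebra with `ζ̄(x,x) = 1`. -/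
def IsQuasiGraded [PartialOrder α] (ρ : α → ℕ) (ζ : α → α → ℚ) : Prop :=
  StrictMono ρ ∧ (∀ x, ζ x x = 1) ∧ ∀ x y : α, ¬ x ≤ y → ζ x y = 0

/-- Convolution in the incidence algebra. -/
def iaMul [PartialOrder α] [Fintype α] (f g : α → α → ℚ) : α → α → ℚ :=
  fun x z => ∑ y ∈ Finset.univ.filter (fun y => x ≤ y ∧ y ≤ z), f x y * g y z

/-- The identity `δ` of the incidence algebra. -/
def iaDelta : α → α → ℚ := fun x z => if x = z then 1 else 0

/-- The Eulerian condition on the interval `[x,z]`: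
`∑_{x ≤ y ≤ z} (-1)^{ρ(y)-ρ(x)} ζ̄(x,y) ζ̄(y,z) = δ_{x,z}`. -/
def EulerianAt [PartialOrder α] [Fintype α] (ρ : α → ℕ) (ζ : α → α → ℚ) (x z : α) : Prop :=
  (∑ y ∈ Finset.univ.filter (fun y => x ≤ y ∧ y ≤ z),
    (-1 : ℚ) ^ (ρ y - ρ x) * ζ x y * ζ y z) = iaDelta x z

/-- `(P,ρ,ζ̄)` is Eulerian. -/
def IsEulerian [PartialOrder α] [Fintype α] (ρ : α → ℕ) (ζ : α → α → ℚ) : Prop :=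
  ∀ x z : α, x ≤ z → EulerianAt ρ ζ x z

/-- The flag `f̄`-vector: `f̄_S = ∑_c ζ̄(c)` over chains from `x` to `z`
whose interior elements have ranks exactly `S`. -/
def flagF [PartialOrder α] [Fintype α] (ρ : α → ℕ) (ζ : α → α → ℚ)
    (x z : α) (S : Finset ℕ) : ℚ :=
  ∑ k ∈ Finset.range (Fintype.card α), ∑ f : Fin (k + 1) → α,
    if IsChainFrom f x z ∧
        (Finset.univ.filter (fun i : Fin (k + 1) => i ≠ 0 ∧ i ≠ Fin.last k)).image
          (fun i => ρ (f i)) = S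
      then chainZeta ζ f else 0

/-- The flag `h̄`-vector: `h̄_S = ∑_{T ⊆ S} (-1)^{|S-T|} f̄_T`. -/
def flagH [PartialOrder α] [Fintype α] (ρ : α → ℕ) (ζ : α → α → ℚ)
    (x z : α) (S : Finset ℕ) : ℚ :=
  ∑ T ∈ S.powerset, (-1 : ℚ) ^ (S.card - T.card) * flagF ρ ζ x z T

/-- Chains with respect to an explicit strict relation `lt`. -/
def IsChainFromRel (lt : α → α → Prop) {k : ℕ} (f : Fin (k + 1) → α) (x z : α) : Prop :=
  (∀ i j : Fin (k + 1), i < j → lt (f i) (f j)) ∧ f 0 = x ∧ f (Fin.last k) = z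

/-- The ab-index with respect to an explicit strict order relation `lt`. -/
def abIndexRel [Fintype α] (lt : α → α → Prop) (ρ : α → ℕ) (ζ : α → α → ℚ)
    (x z : α) : QA :=
  ∑ k ∈ Finset.range (Fintype.card α), ∑ f : Fin (k + 1) → α,
    if IsChainFromRel lt f x z then chainZeta ζ f • chainWt ρ f else 0

/-- The Eulerian condition with respect to an explicit order relation `le`. -/
def IsEulerianRel [Fintype α] (le : α → α → Prop) (ρ : α → ℕ) (ζ : α → α → ℚ) : Prop :=
  ∀ x z : α, le x z →
    (∑ y ∈ Finset.univ.filter (fun y => le x y ∧ le y z),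
      (-1 : ℚ) ^ (ρ y - ρ x) * ζ x y * ζ y z) = (if x = z then (1 : ℚ) else 0)

/-- Carrier of the zipped poset: remove `x` and `y`; the element `z` plays
the role of the new element `w`. -/
abbrev ZipCarrier (α : Type*) (x y : α) : Type _ := {u : α // u ≠ x ∧ u ≠ y}

/-- The strict order of the zipped poset: `u <_Q w` iff `u < x` or `u < y`,
`w <_Q v` iff `x < v`, and otherwise the order is inherited from `P`. -/
def zipLt [PartialOrder α] (x y z : α) : ZipCarrier α x y → ZipCarrier α x y → Prop :=
  fun u v =>
    if u.1 = z then v.1 ≠ z ∧ x < v.1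
    else if v.1 = z then u.1 < x ∨ u.1 < y
    else u.1 < v.1

/-- The (non-strict) order of the zipped poset. -/
def zipLe [PartialOrder α] (x y z : α) : ZipCarrier α x y → ZipCarrier α x y → Prop :=
  fun u v => zipLt x y z u v ∨ u = v

/-- The rank function of the zipped poset: `ρ_Q(w) = ρ(x)`, otherwise inherited. -/
def zipRank [PartialOrder α] (ρ : α → ℕ) (x y z : α) : ZipCarrier α x y → ℕ :=
  fun u => if u.1 = z then ρ x else ρ u.1

/-- The weighted zeta function of the zipped poset:
`ζ̄_Q(w,v) = ζ̄(x,v)`, `ζ̄_Q(u,w) = ζ̄(u,x) + ζ̄(u,y) - ζ̄(u,z)`, otherwise inherited. -/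
def zipZeta [PartialOrder α] (ζ : α → α → ℚ) (x y z : α) :
    ZipCarrier α x y → ZipCarrier α x y → ℚ :=
  fun u v =>
    if v.1 = z then (if u.1 = z then 1 else ζ u.1 x + ζ u.1 y - ζ u.1 z)
    else if u.1 = z then ζ x v.1
    else ζ u.1 v.1

/-! A function `ζ` with `ζ x x = 1` is Eulerian iff `Z̃ * ζ = δ` in the incidence algebra,
where `Z̃ x y = (-1)^(ρ y - ρ x) ζ x y`. On an interval of even rank this equation is linear in
`ζ x z` with coefficient `2`, which gives the recursion. On an interval of odd rank it holds
automatically: by induction `Z̃` inverts `ζ` on all proper subintervals, from the left, and also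
from the right since `ζ * Z̃ = (-1)^(ρ z - ρ x) (Z̃ * ζ)`; associativity then forces
`(Z̃ * ζ) x z = (ζ * Z̃) x z = -(Z̃ * ζ) x z`. -/

theorem rankGap_induction (ρ : α → ℕ) {P : α → α → Prop}
    (step : ∀ x z, (∀ u w, ρ w - ρ u < ρ z - ρ x → P u w) → P x z) (x z : α) : P x z :=
  (measure fun p : α × α => ρ p.2 - ρ p.1).wf.induction (C := fun p => P p.1 p.2) (x, z)
    fun p ih => step p.1 p.2 fun u w h => ih (u, w) h

section IncidenceAlgebra

variable [Fintype α] [PartialOrder α]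

theorem sum_filter_le_le_self (x : α) (g : α → ℚ) :
    ∑ y ∈ univ.filter (fun y => x ≤ y ∧ y ≤ x), g y = g x := by
  rw [show univ.filter (fun y => x ≤ y ∧ y ≤ x) = {x} by
    ext y; simp [le_antisymm_iff, and_comm], sum_singleton]

theorem sum_filter_le_le_of_lt {x z : α} (hxz : x < z) (g : α → ℚ) :
    ∑ y ∈ univ.filter (fun y => x ≤ y ∧ y ≤ z), g y
      = g x + g z + ∑ y ∈ univ.filter (fun y => x < y ∧ y < z), g y := by
  have hsplit : univ.filter (fun y => x ≤ y ∧ y ≤ z)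
      = insert x (insert z (univ.filter fun y => x < y ∧ y < z)) := by
    ext y
    simp only [mem_filter, mem_univ, true_and, mem_insert]
    constructor
    · rintro ⟨hxy, hyz⟩
      rcases hxy.eq_or_lt with rfl | hxy
      · exact Or.inl rfl
      rcases hyz.eq_or_lt with rfl | hyz
      · exact Or.inr (Or.inl rfl)
      exact Or.inr (Or.inr ⟨hxy, hyz⟩)
    · rintro (rfl | rfl | ⟨hxy, hyz⟩)
      exacts [⟨le_rfl, hxz.le⟩, ⟨hxz.le, le_rfl⟩, ⟨hxy.le, hyz.le⟩]
  rw [hsplit, sum_insert (by simp [hxz.ne]), sum_insert (by simp), add_assoc]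

theorem iaMul_self (f g : α → α → ℚ) (x : α) : iaMul f g x x = f x x * g x x :=
  sum_filter_le_le_self x _

theorem iaMul_assoc (f g h : α → α → ℚ) : iaMul (iaMul f g) h = iaMul f (iaMul g h) := by
  funext x z
  simp only [iaMul, sum_mul, mul_sum, mul_assoc]
  refine sum_comm' fun w y => ?_
  simp only [mem_filter, mem_univ, true_and]
  constructor
  · rintro ⟨⟨hxw, hwz⟩, hxy, hyw⟩
    exact ⟨⟨hyw, hwz⟩, hxy, hyw.trans hwz⟩
  · rintro ⟨⟨hyw, hwz⟩, hxy, hyz⟩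
    exact ⟨⟨hxy.trans hyw, hwz⟩, hxy, hyw⟩

/-- A left inverse is a right inverse, one interval at a time. -/
theorem iaMul_apply_eq_of_inverse_on_subintervals {f g : α → α → ℚ} (hf : ∀ u, f u u = 1)
    {x z : α} (hxz : x < z)
    (hleft : ∀ w, x ≤ w → w < z → iaMul f g x w = iaDelta x w)
    (hright : ∀ y, x < y → y ≤ z → iaMul g f y z = iaDelta y z) :
    iaMul f g x z = iaMul g f x z := by
  have hassoc := congrFun (congrFun (iaMul_assoc f g f) x) z
  have hleft' : ∑ w ∈ univ.filter (fun w => x < w ∧ w < z), iaMul f g x w * f w z = 0 :=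
    sum_eq_zero fun w hw => by
      obtain ⟨hxw, hwz⟩ := (mem_filter.1 hw).2
      rw [hleft w hxw.le hwz, iaDelta, if_neg hxw.ne, zero_mul]
  have hright' : ∑ y ∈ univ.filter (fun y => x < y ∧ y < z), f x y * iaMul g f y z = 0 :=
    sum_eq_zero fun y hy => by
      obtain ⟨hxy, hyz⟩ := (mem_filter.1 hy).2
      rw [hright y hxy hyz.le, iaDelta, if_neg hyz.ne, mul_zero]
  rw [iaMul, iaMul, sum_filter_le_le_of_lt hxz, sum_filter_le_le_of_lt hxz, hleft', hright',
    hleft x le_rfl hxz, hright z hxz le_rfl, iaDelta, iaDelta, if_pos rfl, if_pos rfl, hf,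
    hf] at hassoc
  linarith

end IncidenceAlgebra

section Eulerian

variable [Fintype α] [PartialOrder α] {ρ : α → ℕ} {ζ : α → α → ℚ}

def rankSigned (ρ : α → ℕ) (ζ : α → α → ℚ) : α → α → ℚ :=
  fun x y => (-1) ^ (ρ y - ρ x) * ζ x y

theorem eulerianAt_iff_iaMul_rankSigned {x z : α} :
    EulerianAt ρ ζ x z ↔ iaMul (rankSigned ρ ζ) ζ x z = iaDelta x z :=
  Iff.rfl

theorem iaMul_rankSigned_right (hρ : Monotone ρ) (f g : α → α → ℚ) (x z : α) :
    iaMul f (rankSigned ρ g) x z = (-1) ^ (ρ z - ρ x) * iaMul (rankSigned ρ f) g x z := by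
  simp only [iaMul, rankSigned, mul_sum]
  refine sum_congr rfl fun y hy => ?_
  obtain ⟨hxy, hyz⟩ := (mem_filter.1 hy).2
  have hxy' := hρ hxy
  have hyz' := hρ hyz
  have hsign : (-1 : ℚ) ^ (ρ z - ρ x) * (-1) ^ (ρ y - ρ x) = (-1) ^ (ρ z - ρ y) := by
    rw [← pow_add, show ρ z - ρ x + (ρ y - ρ x) = ρ z - ρ y + 2 * (ρ y - ρ x) by omega,
      pow_add, pow_mul]
    norm_num
  rw [← hsign]
  ring

theorem eulerianAt_iff_of_even (hζ : ∀ u, ζ u u = 1) {x z : α} (hxz : x < z)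
    (heven : Even (ρ z - ρ x)) :
    EulerianAt ρ ζ x z ↔ ζ x z = -(1/2) * ∑ y ∈ univ.filter (fun y => x < y ∧ y < z),
      (-1 : ℚ) ^ (ρ y - ρ x) * ζ x y * ζ y z := by
  rw [EulerianAt, sum_filter_le_le_of_lt hxz, iaDelta, if_neg hxz.ne, Nat.sub_self,
    heven.neg_one_pow, hζ, hζ]
  constructor <;> intro h <;> linarith

theorem eulerianAt_of_odd (hρ : Monotone ρ) (hζ : ∀ u, ζ u u = 1) {x z : α} (hxz : x < z)
    (hodd : Odd (ρ z - ρ x))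
    (hleft : ∀ w, x ≤ w → w < z → EulerianAt ρ ζ x w)
    (hright : ∀ y, x < y → y ≤ z → EulerianAt ρ ζ y z) :
    EulerianAt ρ ζ x z := by
  have hcomm := iaMul_apply_eq_of_inverse_on_subintervals (f := rankSigned ρ ζ) (g := ζ)
    (fun u => by simp [rankSigned, hζ]) hxz hleft fun y hxy hyz => by
      rw [iaMul_rankSigned_right hρ, eulerianAt_iff_iaMul_rankSigned.1 (hright y hxy hyz), iaDelta]
      split_ifs with hyz' <;> simp [hyz']
  rw [iaMul_rankSigned_right hρ, hodd.neg_one_pow] at hcomm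
  rw [eulerianAt_iff_iaMul_rankSigned, iaDelta, if_neg hxz.ne]
  linarith

theorem isEulerian_iff_even_recursion (hρ : StrictMono ρ) (hζ : ∀ u, ζ u u = 1) :
    IsEulerian ρ ζ ↔ ∀ x z, x < z → Even (ρ z - ρ x) →
      ζ x z = -(1/2) * ∑ y ∈ univ.filter (fun y => x < y ∧ y < z),
        (-1 : ℚ) ^ (ρ y - ρ x) * ζ x y * ζ y z := by
  refine ⟨fun h x z hxz heven => (eulerianAt_iff_of_even hζ hxz heven).1 (h x z hxz.le),
    fun h => ?_⟩
  refine rankGap_induction ρ fun x z ih hxz => ?_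
  rcases hxz.eq_or_lt with rfl | hxz
  · simp [EulerianAt, iaDelta, sum_filter_le_le_self, hζ]
  rcases Nat.even_or_odd (ρ z - ρ x) with heven | hodd
  · exact (eulerianAt_iff_of_even hζ hxz heven).2 (h x z hxz heven)
  have hxz' := hρ hxz
  refine eulerianAt_of_odd hρ.monotone hζ hxz hodd (fun w hxw hwz => ?_) fun y hxy hyz => ?_
  · exact ih x w (by have := hρ.monotone hxw; have := hρ hwz; omega) hxw
  · exact ih y z (by have := hρ hxy; have := hρ.monotone hyz; omega) hyz

theorem eq_of_even_recursion (hρ : StrictMono ρ) {ζ' : α → α → ℚ}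
    (hζ : ∀ u, ζ u u = 1) (hζ' : ∀ u, ζ' u u = 1)
    (hζ0 : ∀ x y, ¬ x ≤ y → ζ x y = 0) (hζ'0 : ∀ x y, ¬ x ≤ y → ζ' x y = 0)
    (hodd : ∀ x z, x < z → Odd (ρ z - ρ x) → ζ x z = ζ' x z)
    (hrec : ∀ x z, x < z → Even (ρ z - ρ x) →
      ζ x z = -(1/2) * ∑ y ∈ univ.filter (fun y => x < y ∧ y < z),
        (-1 : ℚ) ^ (ρ y - ρ x) * ζ x y * ζ y z)
    (hrec' : ∀ x z, x < z → Even (ρ z - ρ x) →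
      ζ' x z = -(1/2) * ∑ y ∈ univ.filter (fun y => x < y ∧ y < z),
        (-1 : ℚ) ^ (ρ y - ρ x) * ζ' x y * ζ' y z) :
    ζ = ζ' := by
  funext x z
  induction x, z using rankGap_induction ρ with
  | step x z ih =>
    by_cases hxz : x ≤ z
    swap
    · rw [hζ0 x z hxz, hζ'0 x z hxz]
    rcases hxz.eq_or_lt with rfl | hxz
    · rw [hζ, hζ']
    rcases Nat.even_or_odd (ρ z - ρ x) with heven | hodd'
    · rw [hrec x z hxz heven, hrec' x z hxz heven]
      congr 1
      refine sum_congr rfl fun y hy => ?_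
      obtain ⟨hxy, hyz⟩ := (mem_filter.1 hy).2
      have := hρ hxy
      have := hρ hyz
      rw [ih x y (by omega), ih y z (by omega)]
    · exact hodd x z hxz hodd'

variable (ρ) in
def evenExtension (hρ : StrictMono ρ) (ζodd : α → α → ℚ) (x z : α) : ℚ :=
  if x = z then 1
  else if x < z then
    if Even (ρ z - ρ x) then
      -(1/2) * ∑ y ∈ (univ.filter fun y => x < y ∧ y < z).attach,
        (-1 : ℚ) ^ (ρ y.1 - ρ x) * evenExtension hρ ζodd x y.1 * evenExtension hρ ζodd y.1 z
    else ζodd x z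
  else 0
termination_by ρ z - ρ x
decreasing_by
  all_goals
    obtain ⟨hxy, hyz⟩ := (mem_filter.1 y.2).2
    have := hρ hxy
    have := hρ hyz
    omega

variable {hρ : StrictMono ρ} {ζodd : α → α → ℚ}

theorem evenExtension_self (x : α) : evenExtension ρ hρ ζodd x x = 1 := by
  rw [evenExtension, if_pos rfl]

theorem evenExtension_of_not_le {x z : α} (h : ¬ x ≤ z) : evenExtension ρ hρ ζodd x z = 0 := by
  rw [evenExtension, if_neg (fun e => h e.le), if_neg (fun e => h e.le)]

theorem evenExtension_of_odd {x z : α} (hxz : x < z) (hodd : Odd (ρ z - ρ x)) :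
    evenExtension ρ hρ ζodd x z = ζodd x z := by
  rw [evenExtension, if_neg hxz.ne, if_pos hxz, if_neg (Nat.not_even_iff_odd.2 hodd)]

theorem evenExtension_of_even {x z : α} (hxz : x < z) (heven : Even (ρ z - ρ x)) :
    evenExtension ρ hρ ζodd x z = -(1/2) * ∑ y ∈ univ.filter (fun y => x < y ∧ y < z),
      (-1 : ℚ) ^ (ρ y - ρ x) * evenExtension ρ hρ ζodd x y * evenExtension ρ hρ ζodd y z := by
  rw [evenExtension, if_neg hxz.ne, if_pos hxz, if_pos heven,
    sum_attach _ fun y => (-1 : ℚ) ^ (ρ y - ρ x) * evenExtension ρ hρ ζodd x y *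
      evenExtension ρ hρ ζodd y z]

end Eulerian

/-- odd values of `ζ̄` may be chosen arbitrarily; there is a unique
extension to even rank differences, given by the stated formula, making
`(P,ρ,ζ̄)` an Eulerian quasi-graded poset. -/
theorem eulerian_extension_of_odd_values {α : Type*} [Fintype α] [PartialOrder α]
    (ρ : α → ℕ) (hρ : StrictMono ρ) (ζodd : α → α → ℚ) :
    (∃! ζ : α → α → ℚ,
      (∀ x, ζ x x = 1) ∧ (∀ x y : α, ¬ x ≤ y → ζ x y = 0) ∧
      (∀ x y : α, x < y → Odd (ρ y - ρ x) → ζ x y = ζodd x y) ∧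
      IsEulerian ρ ζ) ∧
    (∀ ζ : α → α → ℚ,
      (∀ x, ζ x x = 1) → (∀ x y : α, ¬ x ≤ y → ζ x y = 0) →
      (∀ x y : α, x < y → Odd (ρ y - ρ x) → ζ x y = ζodd x y) →
      IsEulerian ρ ζ →
      ∀ x z : α, x < z → Even (ρ z - ρ x) →
        ζ x z = -(1/2) * ∑ y ∈ Finset.univ.filter (fun y => x < y ∧ y < z),
          (-1 : ℚ) ^ (ρ y - ρ x) * ζ x y * ζ y z) := by
  refine ⟨⟨evenExtension ρ hρ ζodd, ⟨evenExtension_self, fun _ _ => evenExtension_of_not_le,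
    fun _ _ => evenExtension_of_odd,
    (isEulerian_iff_even_recursion hρ evenExtension_self).2 fun _ _ => evenExtension_of_even⟩,
    ?_⟩, fun ζ hζ _ _ hE => (isEulerian_iff_even_recursion hρ hζ).1 hE⟩
  rintro ζ ⟨hζ, hζ0, hodd, hE⟩
  exact eq_of_even_recursion hρ hζ evenExtension_self hζ0 (fun _ _ => evenExtension_of_not_le)
    (fun x z hxz h => (hodd x z hxz h).trans (evenExtension_of_odd hxz h).symm)
    ((isEulerian_iff_even_recursion hρ hζ).1 hE) fun _ _ => evenExtension_of_even
end
end

section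
/- Let (P,ρ,ζ̄) be a quasi-graded poset with minimal element 0̂ and maximal element 1̂ of odd rank n (i.e., ρ(1̂) − ρ(0̂) = n is odd), such that every proper interval [x,y] ⊊ [0̂,1̂] is Eulerian. Then (P,ρ,ζ̄) is an Eulerian quasi-graded poset. -/
open scoped Classical
open Finset

noncomputable section

variable {α : Type*}

/-
If every proper subinterval of `[x,z]` is Eulerian, the sum
`∑_{x ≤ y ≤ u ≤ z} (-1)^{ρ(u)-ρ(y)} ζ̄(x,y) ζ̄(y,u) ζ̄(u,z)` can be evaluated in two ways.
Summing over `u` first, only `y = x` and `y = z` survive, giving `E + ζ̄(x,z)`, where `E` is the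
Eulerian sum of `[x,z]`. Summing over `y` first, after splitting the sign as
`(-1)^{ρ(u)-ρ(x)} (-1)^{ρ(y)-ρ(x)}`, only `u = x` and `u = z` survive, giving
`(-1)^{ρ(z)-ρ(x)} E + ζ̄(x,z)`. When `ρ(z) - ρ(x)` is odd this forces `E = 0`.
-/

lemma neg_one_pow_tsub_eq_mul {R : Type*} [Monoid R] [HasDistribNeg R] {a b c : ℕ}
    (hab : a ≤ b) (hbc : b ≤ c) : (-1 : R) ^ (c - b) = (-1) ^ (c - a) * (-1) ^ (b - a) := by
  rw [show c - a = (c - b) + (b - a) by omega, pow_add, mul_assoc, ← pow_add, ← two_mul, pow_mul,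
    neg_one_sq, one_pow, mul_one]

namespace QuasiGraded

variable {α : Type*} [Fintype α] [PartialOrder α] {ρ : α → ℕ} {ζ : α → α → ℚ}

def eulerSum (ρ : α → ℕ) (ζ : α → α → ℚ) (x z : α) : ℚ :=
  ∑ y, (-1 : ℚ) ^ (ρ y - ρ x) * ζ x y * ζ y z

variable (hζ : ∀ x y : α, ¬ x ≤ y → ζ x y = 0)
include hζ

lemma eulerianAt_iff_eulerSum {x z : α} :
    EulerianAt ρ ζ x z ↔ eulerSum ρ ζ x z = iaDelta x z := by
  rw [EulerianAt, eulerSum, Finset.sum_filter]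
  refine Eq.congr_left (Finset.sum_congr rfl fun y _ => ?_)
  by_cases hxy : x ≤ y
  · by_cases hyz : y ≤ z
    · simp [hxy, hyz]
    · simp [hyz, hζ y z hyz]
  · simp [hxy, hζ x y hxy]

lemma eulerSum_eq_iaDelta {y z : α} (h : y ≤ z → EulerianAt ρ ζ y z) :
    eulerSum ρ ζ y z = iaDelta y z := by
  by_cases hyz : y ≤ z
  · exact (eulerianAt_iff_eulerSum hζ).1 (h hyz)
  · have hne : y ≠ z := fun h => hyz h.le
    refine (Finset.sum_eq_zero fun u _ => ?_).trans (if_neg hne).symm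
    by_cases hyu : y ≤ u
    · rw [hζ u z fun huz => hyz (hyu.trans huz), mul_zero]
    · rw [hζ y u hyu, mul_zero, zero_mul]

lemma sum_mul_eulerSum_eq_sum_eulerSum_mul (hρ : Monotone ρ) (x z : α) :
    ∑ y, ζ x y * eulerSum ρ ζ y z = ∑ u, (-1 : ℚ) ^ (ρ u - ρ x) * eulerSum ρ ζ x u * ζ u z := by
  simp only [eulerSum, Finset.mul_sum, Finset.sum_mul]
  rw [Finset.sum_comm]
  refine Finset.sum_congr rfl fun u _ => Finset.sum_congr rfl fun y _ => ?_
  by_cases hxy : x ≤ y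
  · by_cases hyu : y ≤ u
    · rw [neg_one_pow_tsub_eq_mul (hρ hxy) (hρ hyu)]
      ring
    · simp [hζ y u hyu]
  · simp [hζ x y hxy]

variable (hdiag : ∀ x : α, ζ x x = 1)
include hdiag

lemma sum_mul_eulerSum_of_eulerianAt_right {x z : α} (hxz : x ≠ z)
    (hright : ∀ y, x < y → y ≤ z → EulerianAt ρ ζ y z) :
    ∑ y, ζ x y * eulerSum ρ ζ y z = eulerSum ρ ζ x z + ζ x z := by
  have hrest : ∀ y ∈ Finset.univ.erase x,
      ζ x y * eulerSum ρ ζ y z = if z = y then ζ x y else 0 := by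
    intro y hy
    by_cases hxy : x ≤ y
    · rw [eulerSum_eq_iaDelta hζ (hright y (lt_of_le_of_ne hxy (Finset.ne_of_mem_erase hy).symm)),
        iaDelta, eq_comm (a := y)]
      simp
    · simp [hζ x y hxy]
  rw [← Finset.add_sum_erase _ _ (Finset.mem_univ x), hdiag, one_mul,
    Finset.sum_congr rfl hrest, Finset.sum_ite_eq]
  simp [hxz.symm]

lemma sum_eulerSum_mul_of_eulerianAt_left {x z : α} (hxz : x ≠ z)
    (hleft : ∀ u, x ≤ u → u < z → EulerianAt ρ ζ x u) :
    ∑ u, (-1 : ℚ) ^ (ρ u - ρ x) * eulerSum ρ ζ x u * ζ u z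
      = (-1 : ℚ) ^ (ρ z - ρ x) * eulerSum ρ ζ x z + ζ x z := by
  have hrest : ∀ u ∈ Finset.univ.erase z,
      (-1 : ℚ) ^ (ρ u - ρ x) * eulerSum ρ ζ x u * ζ u z = if x = u then ζ x z else 0 := by
    intro u hu
    by_cases huz : u ≤ z
    · rw [eulerSum_eq_iaDelta hζ fun hxu =>
        hleft u hxu (lt_of_le_of_ne huz (Finset.ne_of_mem_erase hu)), iaDelta]
      split_ifs with hxu
      · simp [hxu]
      · simp
    · rw [hζ u z huz, mul_zero, eq_comm, ite_eq_right_iff]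
      rintro rfl
      exact hζ x z huz
  rw [← Finset.add_sum_erase _ _ (Finset.mem_univ z), hdiag, mul_one,
    Finset.sum_congr rfl hrest, Finset.sum_ite_eq]
  simp [hxz]

theorem eulerianAt_of_odd_of_proper (hρ : Monotone ρ) {x z : α} (hodd : Odd (ρ z - ρ x))
    (hright : ∀ y, x < y → y ≤ z → EulerianAt ρ ζ y z)
    (hleft : ∀ u, x ≤ u → u < z → EulerianAt ρ ζ x u) :
    EulerianAt ρ ζ x z := by
  have hxz : x ≠ z := by
    rintro rfl
    simp at hodd
  have hdouble := sum_mul_eulerSum_eq_sum_eulerSum_mul hζ hρ x z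
  rw [sum_mul_eulerSum_of_eulerianAt_right hζ hdiag hxz hright,
    sum_eulerSum_mul_of_eulerianAt_left hζ hdiag hxz hleft, hodd.neg_one_pow] at hdouble
  rw [eulerianAt_iff_eulerSum hζ, iaDelta, if_neg hxz]
  linarith

end QuasiGraded

/-- a quasi-graded poset with `0̂` and `1̂` of odd rank all of whose
proper intervals are Eulerian is itself Eulerian. -/
theorem eulerian_of_proper_intervals_odd_rank {α : Type*} [Fintype α] [PartialOrder α]
    [BoundedOrder α] (ρ : α → ℕ) (ζ : α → α → ℚ) (hq : IsQuasiGraded ρ ζ)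
    (n : ℕ) (hn : ρ (⊤ : α) - ρ (⊥ : α) = n) (hodd : Odd n)
    (hproper : ∀ x z : α, x ≤ z → ¬(x = ⊥ ∧ z = ⊤) → EulerianAt ρ ζ x z) :
    IsEulerian ρ ζ := by
  obtain ⟨hρ, hdiag, hζ⟩ := hq
  intro x z hxz
  by_cases htop : x = ⊥ ∧ z = ⊤
  · obtain ⟨rfl, rfl⟩ := htop
    refine QuasiGraded.eulerianAt_of_odd_of_proper hζ hdiag hρ.monotone (hn ▸ hodd) ?_ ?_
    · exact fun y hy _ => hproper y ⊤ le_top fun h => hy.ne' h.1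
    · exact fun u _ hu => hproper ⊥ u bot_le fun h => hu.ne h.2
  · exact hproper x z hxz htop
end
end

section
/- Let P be a finite poset with 0̂ and 1̂, let y be an element with 0̂ < y < 1̂, and let Q = P − {y} be the induced subposet. If f is in the incidence algebra of P with f(x,x) = 1 for all x, then (f|_Q)^{-1}(0̂,1̂) = f^{-1}(0̂,1̂) − f^{-1}(0̂,y)·f^{-1}(y,1̂), where f|_Q denotes the restriction of f to intervals of Q and the inverses are taken in the incidence algebras of Q and P respectively. -/
/-!
By uniqueness of inverses in the incidence algebra it suffices to exhibit a right inverse of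
`f|_Q`. With `g = f⁻¹`, the Schur complement `h(u,v) = g(u,v) - g(u,y) g(y,v)` is one: on an
interval `[x,z]` of `Q`, the sum `(f|_Q · h)(x,z)` is the sum over `[x,z]` in `P` with the term
at `y` removed, and the two missing `y`-terms cancel by `f g = δ` on `[x,z]` and on `[x,y]`,
together with `g(y,y) = 1`.
-/

open scoped Classical
open Finset

noncomputable section

variable {α : Type*}

section IncidenceAlgebra

variable [PartialOrder α]

def iaTrunc (g : α → α → ℚ) : α → α → ℚ := fun u v => if u ≤ v then g u v else 0

lemma iaTrunc_of_not_le (g : α → α → ℚ) {u v : α} (h : ¬ u ≤ v) : iaTrunc g u v = 0 :=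
  if_neg h

lemma iaTrunc_of_le (g : α → α → ℚ) {u v : α} (h : u ≤ v) : iaTrunc g u v = g u v :=
  if_pos h

variable [Fintype α]

lemma iaMul_assoc_s4 (a b c : α → α → ℚ) : iaMul (iaMul a b) c = iaMul a (iaMul b c) := by
  funext x z
  simp only [iaMul, Finset.sum_mul, Finset.mul_sum, mul_assoc]
  refine Finset.sum_comm' fun u v => ?_
  simp only [Finset.mem_filter, Finset.mem_univ, true_and]
  constructor <;> rintro ⟨⟨h₁, h₂⟩, h₃, h₄⟩ <;> refine ⟨⟨?_, ?_⟩, ?_, ?_⟩ <;> order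

lemma iaMul_apply_self (a b : α → α → ℚ) (x : α) : iaMul a b x x = a x x * b x x := by
  rw [iaMul, Finset.sum_eq_single_of_mem x (by simp)]
  intro u hu hux
  simp only [Finset.mem_filter, Finset.mem_univ, true_and] at hu
  exact absurd (le_antisymm hu.2 hu.1) hux

lemma iaDelta_iaMul_of_le (b : α → α → ℚ) {x z : α} (h : x ≤ z) :
    iaMul iaDelta b x z = b x z := by
  rw [iaMul, Finset.sum_eq_single_of_mem x (by simp [h])]
  · simp [iaDelta]
  · intro u _ hux
    simp [iaDelta, Ne.symm hux]

lemma iaMul_iaDelta_of_le (a : α → α → ℚ) {x z : α} (h : x ≤ z) :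
    iaMul a iaDelta x z = a x z := by
  rw [iaMul, Finset.sum_eq_single_of_mem z (by simp [h])]
  · simp [iaDelta]
  · intro u _ huz
    simp [iaDelta, huz]

lemma left_inv_eq_right_inv_of_le {a b c : α → α → ℚ} (hba : iaMul b a = iaDelta)
    (hac : iaMul a c = iaDelta) {x z : α} (h : x ≤ z) : b x z = c x z :=
  calc b x z = iaMul b iaDelta x z := (iaMul_iaDelta_of_le b h).symm
    _ = iaMul (iaMul b a) c x z := by rw [iaMul_assoc_s4, hac]
    _ = c x z := by rw [hba, iaDelta_iaMul_of_le c h]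

lemma iaMul_eq_sum_erase_add (a b : α → α → ℚ) (x y z : α) :
    iaMul a b x z = ∑ u ∈ (univ.filter fun u => x ≤ u ∧ u ≤ z).erase y, a x u * b u z +
      if x ≤ y ∧ y ≤ z then a x y * b y z else 0 := by
  split_ifs with hy
  · exact (Finset.sum_erase_add _ _ (by simpa using hy)).symm
  · rw [Finset.erase_eq_of_notMem (by simpa using hy), add_zero, iaMul]

lemma iaMul_subtype_ne_apply (a b : α → α → ℚ) (y : α) (x z : {u : α // u ≠ y}) :
    iaMul (fun u v : {u : α // u ≠ y} => a u.1 v.1) (fun u v => b u.1 v.1) x z =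
      ∑ u ∈ (univ.filter fun u => x.1 ≤ u ∧ u ≤ z.1).erase y, a x.1 u * b u z.1 := by
  have hmap : (univ.filter fun u => x.1 ≤ u ∧ u ≤ z.1).erase y =
      (univ.filter fun u : {u : α // u ≠ y} => x ≤ u ∧ u ≤ z).map
        (Function.Embedding.subtype _) := by
    ext u
    simp only [Finset.mem_erase, Finset.mem_filter, Finset.mem_univ, true_and, Finset.mem_map,
      Function.Embedding.coe_subtype, Subtype.exists, exists_and_right, exists_eq_right]
    exact ⟨fun ⟨hy, hx, hz⟩ => ⟨hy, hx, hz⟩, fun ⟨hy, hx, hz⟩ => ⟨hy, hx, hz⟩⟩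
  rw [hmap, Finset.sum_map]
  rfl

lemma iaMul_iaTrunc (f g : α → α → ℚ) : iaMul f (iaTrunc g) = iaMul f g := by
  funext x z
  refine Finset.sum_congr rfl fun u hu => ?_
  rw [iaTrunc_of_le g (Finset.mem_filter.1 hu).2.2]

end IncidenceAlgebra

section Deletion

variable [Fintype α] [PartialOrder α] {f g : α → α → ℚ} {y : α}

lemma sum_interval_erase_mul_apply_eq_neg (hfy : f y y = 1) (hfg : iaMul f g = iaDelta)
    (hg : ∀ u v, ¬ u ≤ v → g u v = 0) {x z : α} (hxy : x ≠ y) (hyz : y ≤ z) :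
    ∑ u ∈ (univ.filter fun u => x ≤ u ∧ u ≤ z).erase y, f x u * g u y =
      -if x ≤ y then f x y else 0 := by
  have hgy : g y y = 1 := by
    have h := congrFun (congrFun hfg y) y
    rw [iaMul_apply_self, hfy, one_mul] at h
    simpa [iaDelta] using h
  have hshrink : ∑ u ∈ (univ.filter fun u => x ≤ u ∧ u ≤ y).erase y, f x u * g u y =
      ∑ u ∈ (univ.filter fun u => x ≤ u ∧ u ≤ z).erase y, f x u * g u y := by
    refine Finset.sum_subset (fun u hu => ?_) fun u hu hu' => ?_
    · simp only [Finset.mem_erase, Finset.mem_filter, Finset.mem_univ, true_and] at hu ⊢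
      exact ⟨hu.1, hu.2.1, hu.2.2.trans hyz⟩
    · simp only [Finset.mem_erase, Finset.mem_filter, Finset.mem_univ, true_and] at hu hu'
      rw [hg u y fun huy => hu' ⟨hu.1, hu.2.1, huy⟩, mul_zero]
  have hsplit := iaMul_eq_sum_erase_add f g x y y
  rw [hfg, iaDelta, if_neg hxy, hgy] at hsplit
  rw [← hshrink, eq_neg_iff_add_eq_zero]
  simpa using hsplit.symm

lemma iaMul_subtype_ne_sub_mul_eq_iaDelta (hfy : f y y = 1) (hfg : iaMul f g = iaDelta)
    (hg : ∀ u v, ¬ u ≤ v → g u v = 0) :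
    iaMul (fun u v : {u : α // u ≠ y} => f u.1 v.1)
      (fun u v => g u.1 v.1 - g u.1 y * g y v.1) = iaDelta := by
  funext x z
  rw [iaMul_subtype_ne_apply f (fun u v => g u v - g u y * g y v)]
  simp only [mul_sub, Finset.sum_sub_distrib, ← mul_assoc, ← Finset.sum_mul]
  have hmain := iaMul_eq_sum_erase_add f g x y z
  have hδ : (iaDelta x z : ℚ) = iaDelta x.1 z.1 := by simp [iaDelta, Subtype.ext_iff]
  rw [hfg] at hmain
  by_cases hyz : y ≤ z.1
  · rw [sum_interval_erase_mul_apply_eq_neg hfy hfg hg x.2 hyz, hδ, hmain]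
    by_cases hxy : x.1 ≤ y <;> simp [hxy, hyz]
  · rw [hg y z hyz, hδ, hmain]
    simp [hyz]

end Deletion

theorem inverse_delete_element_general {α : Type*} [Fintype α] [PartialOrder α] [BoundedOrder α]
    (f : α → α → ℚ) (hf : ∀ x, f x x = 1)
    (y : α) (hy₁ : (⊥ : α) < y) (hy₂ : y < (⊤ : α))
    (g : α → α → ℚ) (hg₁ : iaMul f g = iaDelta)
    (gQ : {u : α // u ≠ y} → {u : α // u ≠ y} → ℚ)
    (hgQ₂ : iaMul gQ (fun u v : {u : α // u ≠ y} => f u.1 v.1) = iaDelta) :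
    gQ ⟨⊥, ne_of_lt hy₁⟩ ⟨⊤, (ne_of_lt hy₂).symm⟩ =
      g ⊥ ⊤ - g ⊥ y * g y ⊤ := by
  -- `hg₁` says nothing about `g` off intervals, but the candidate inverse needs it to vanish there.
  have hgT : iaMul f (iaTrunc g) = iaDelta := by rw [iaMul_iaTrunc, hg₁]
  have hright := iaMul_subtype_ne_sub_mul_eq_iaDelta (hf y) hgT fun _ _ => iaTrunc_of_not_le g
  rw [left_inv_eq_right_inv_of_le hgQ₂ hright
    (show (⟨⊥, ne_of_lt hy₁⟩ : {u : α // u ≠ y}) ≤ ⟨⊤, (ne_of_lt hy₂).symm⟩ from bot_le)]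
  simp only [iaTrunc_of_le g bot_le, iaTrunc_of_le g hy₂.le]

/-- removing an element `y` with `0̂ < y < 1̂`:
`(f|_Q)⁻¹(0̂,1̂) = f⁻¹(0̂,1̂) - f⁻¹(0̂,y)·f⁻¹(y,1̂)`. -/
theorem inverse_delete_element {α : Type*} [Fintype α] [PartialOrder α] [BoundedOrder α]
    (f : α → α → ℚ) (hf : ∀ x, f x x = 1)
    (y : α) (hy₁ : (⊥ : α) < y) (hy₂ : y < (⊤ : α))
    (g : α → α → ℚ) (hg₁ : iaMul f g = iaDelta) (hg₂ : iaMul g f = iaDelta)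
    (gQ : {u : α // u ≠ y} → {u : α // u ≠ y} → ℚ)
    (hgQ₁ : iaMul (fun u v : {u : α // u ≠ y} => f u.1 v.1) gQ = iaDelta)
    (hgQ₂ : iaMul gQ (fun u v : {u : α // u ≠ y} => f u.1 v.1) = iaDelta) :
    gQ ⟨⊥, ne_of_lt hy₁⟩ ⟨⊤, (ne_of_lt hy₂).symm⟩ =
      g ⊥ ⊤ - g ⊥ y * g y ⊤ :=
  inverse_delete_element_general f hf y hy₁ hy₂ g hg₁ gQ hgQ₂
end
end

section
/- Let (P,ρ,ζ̄) be an Eulerian quasi-graded poset of rank n+1 with 0̂ and 1̂ and ρ(0̂)=0. Then the flag h̄-vector satisfies h̄_S = h̄_{S̄} for every subset S ⊆ {1,…,n}, where S̄ = {1,…,n} − S. -/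
open scoped Classical
open Finset

noncomputable section

variable {α : Type*}

/-!
Grouping the chains of `[x, z]` by their first interior element turns the Eulerian relation
`∑_{x ≤ y ≤ z} (-1)^{ρ(y) - ρ(x)} ζ̄(x,y) ζ̄(y,z) = 0` into the chain identity
`∑_{T ⊆ (ρ x, ρ z)} (-1)^{|T|} f̄_T(x,z) = -(-1)^{ρ x + ρ z} ζ̄(x,z)`.
Cutting chains at the ranks of `S` factors `∑_{S ⊆ T} (-1)^{|T|} f̄_T` into such intervals, so
on `[0̂, 1̂]` it equals `(-1)^n f̄_S`. Substituting this relation into the definition of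
`h̄_{S̄}` and summing out the Boolean lattice gives `h̄_S`.
-/

section Powerset

variable {β R : Type*} [DecidableEq β] [CommRing R]

theorem neg_one_pow_mul_self (n : ℕ) : (-1 : R) ^ n * (-1) ^ n = 1 := by
  rw [← mul_pow, neg_one_mul, neg_neg, one_pow]

theorem neg_one_pow_sub_of_le {a b : ℕ} (h : b ≤ a) :
    (-1 : R) ^ (a - b) = (-1) ^ a * (-1) ^ b := by
  rw [← pow_sub_mul_pow (-1 : R) h, mul_assoc, neg_one_pow_mul_self, mul_one]

theorem sum_powerset_neg_one_pow_card_eq_ite (s : Finset β) :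
    ∑ t ∈ s.powerset, (-1 : R) ^ t.card = if s = ∅ then 1 else 0 := by
  have h := congrArg (Int.cast : ℤ → R) (sum_powerset_neg_one_pow_card (x := s))
  push_cast at h
  simpa [apply_ite (Int.cast : ℤ → R)] using h

theorem sum_powerset_neg_one_pow_sub_mul_eq_sdiff (I : Finset β) (f : Finset β → R)
    (hf : ∀ S ⊆ I, ∑ T ∈ I.powerset with S ⊆ T, (-1) ^ T.card * f T = (-1) ^ I.card * f S)
    {S : Finset β} (hS : S ⊆ I) :
    ∑ T ∈ S.powerset, (-1) ^ (S.card - T.card) * f T =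
      ∑ U ∈ (I \ S).powerset, (-1) ^ ((I \ S).card - U.card) * f U := by
  calc ∑ T ∈ S.powerset, (-1) ^ (S.card - T.card) * f T
      = ∑ T ∈ I.powerset, (if T \ S = ∅ then 1 else 0) *
          ((-1) ^ S.card * (-1) ^ T.card * f T) := by
        have hfilter : {T ∈ I.powerset | T ⊆ S} = S.powerset := by
          ext T
          simpa using fun hT => hT.trans hS
        simp only [ite_mul, one_mul, zero_mul, ← sum_filter, sdiff_eq_empty_iff_subset, hfilter]
        refine sum_congr rfl fun T hT => ?_
        rw [neg_one_pow_sub_of_le (card_le_card (mem_powerset.1 hT))]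
    _ = ∑ T ∈ I.powerset, ∑ U ∈ (T \ S).powerset,
          (-1) ^ U.card * ((-1) ^ S.card * (-1) ^ T.card * f T) := by
        simp only [← sum_mul, sum_powerset_neg_one_pow_card_eq_ite]
    _ = ∑ U ∈ (I \ S).powerset, ∑ T ∈ I.powerset with U ⊆ T,
          (-1) ^ U.card * ((-1) ^ S.card * (-1) ^ T.card * f T) := by
        refine sum_comm' fun T U => ?_
        simp only [mem_powerset, mem_filter, subset_sdiff]
        exact ⟨fun ⟨hTI, hUT, hUS⟩ => ⟨⟨hTI, hUT⟩, hUT.trans hTI, hUS⟩,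
          fun ⟨⟨hTI, hUT⟩, _, hUS⟩ => ⟨hTI, hUT, hUS⟩⟩
    _ = ∑ U ∈ (I \ S).powerset, (-1) ^ ((I \ S).card - U.card) * f U := by
        refine sum_congr rfl fun U hU => ?_
        have hsum := hf U ((mem_powerset.1 hU).trans sdiff_subset)
        rw [← card_sdiff_add_card_eq_card hS, pow_add] at hsum
        rw [neg_one_pow_sub_of_le (card_le_card (mem_powerset.1 hU))]
        simp only [mul_assoc, ← mul_sum, hsum]
        linear_combination ((-1) ^ U.card * (-1) ^ (I \ S).card * f U) *
          neg_one_pow_mul_self (R := R) S.card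

end Powerset

section LinearOrder

variable {β M : Type*} [LinearOrder β] [AddCommMonoid M]

theorem Ioo_filter_gt [LocallyFiniteOrder β] (a b c : β) :
    {x ∈ Ioo a b | c < x} = Ioo (max a c) b := by
  grind

theorem insert_eq_insert_iff_of_forall_lt {a b : β} {A B : Finset β}
    (hA : ∀ t ∈ A, a < t) (hB : ∀ t ∈ B, b < t) :
    insert a A = insert b B ↔ a = b ∧ A = B := by
  refine ⟨fun h => ?_, fun ⟨hab, hAB⟩ => hab ▸ hAB ▸ rfl⟩
  have ha : a ∈ insert b B := h ▸ mem_insert_self a A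
  have hb : b ∈ insert a A := h.symm ▸ mem_insert_self b B
  obtain rfl : a = b := by
    rcases mem_insert.1 ha with hab | haB
    · exact hab
    rcases mem_insert.1 hb with hba | hbA
    · exact hba.symm
    exact absurd (hA b hbA) (hB a haB).not_gt
  refine ⟨rfl, ?_⟩
  rw [← erase_insert (fun h => (hA a h).false), h, erase_insert (fun h => (hB a h).false)]

theorem sum_powerset_eq_add_sum_insert_min (s : Finset β) (F : Finset β → M) :
    ∑ T ∈ s.powerset, F T =
      F ∅ + ∑ m ∈ s, ∑ T ∈ {x ∈ s | m < x}.powerset, F (insert m T) := by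
  induction s using induction_on_min with
  | empty => simp
  | insert a s has ih =>
    have ha : a ∉ s := fun h => lt_irrefl a (has a h)
    have hfa : {x ∈ insert a s | a < x} = s := by
      ext t
      simp only [mem_filter, mem_insert]
      exact ⟨fun ⟨h, hat⟩ => h.resolve_left hat.ne', fun ht => ⟨Or.inr ht, has t ht⟩⟩
    have hfm : ∀ m ∈ s, ∑ T ∈ {x ∈ insert a s | m < x}.powerset, F (insert m T) =
        ∑ T ∈ {x ∈ s | m < x}.powerset, F (insert m T) := fun m hm => by
      rw [filter_insert, if_neg (not_lt.2 (has m hm).le)]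
    rw [sum_powerset_insert ha, ih, sum_insert ha, hfa, sum_congr rfl hfm]
    abel

theorem sum_powerset_superset_insert_eq_sum_sum (I : Finset β) {s : β} (hs : s ∈ I)
    {S : Finset β} (hS : ∀ t ∈ S, s < t) (F : Finset β → M) :
    ∑ T ∈ I.powerset with insert s S ⊆ T, F T =
      ∑ A ∈ {x ∈ I | x < s}.powerset, ∑ B ∈ {x ∈ I | s < x}.powerset with S ⊆ B,
        F (A ∪ insert s B) := by
  have hsplit : ∀ T : Finset β, s ∈ T →
      {x ∈ T | x < s} ∪ insert s {x ∈ T | s < x} = T := by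
    intro T hsT
    ext t
    simp only [mem_union, mem_insert, mem_filter]
    rcases lt_trichotomy t s with h | rfl | h <;> grind
  rw [← sum_product']
  refine sum_nbij' (fun T => ({x ∈ T | x < s}, {x ∈ T | s < x}))
    (fun p => p.1 ∪ insert s p.2) ?_ ?_ ?_ ?_ ?_
  · intro T hT
    simp only [mem_filter, mem_powerset, mem_product, insert_subset_iff] at hT ⊢
    exact ⟨filter_subset_filter _ hT.1, filter_subset_filter _ hT.1,
      fun t ht => mem_filter.2 ⟨hT.2.2 ht, hS t ht⟩⟩
  · intro p hp
    simp only [mem_filter, mem_powerset, mem_product] at hp ⊢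
    refine ⟨union_subset (hp.1.trans (filter_subset _ _))
      (insert_subset hs (hp.2.1.trans (filter_subset _ _))), ?_⟩
    exact (insert_subset_insert s hp.2.2).trans subset_union_right
  · intro T hT
    simp only [mem_filter, mem_powerset, insert_subset_iff] at hT
    exact hsplit T hT.2.1
  · intro p hp
    simp only [mem_filter, mem_powerset, mem_product, subset_iff] at hp
    ext t <;> simp only [mem_filter, mem_union, mem_insert] <;> grind
  · intro T hT
    simp only [mem_filter, mem_powerset, insert_subset_iff] at hT
    rw [hsplit T hT.2.1]

end LinearOrder

section Chains

variable {ρ : α → ℕ} {ζ : α → α → ℚ}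

def interiorRanks (ρ : α → ℕ) {k : ℕ} (f : Fin (k + 1) → α) : Finset ℕ :=
  (univ.filter fun i : Fin (k + 1) => i ≠ 0 ∧ i ≠ Fin.last k).image fun i => ρ (f i)

theorem interiorRanks_eq_empty {k : ℕ} (hk : k ≤ 1) (f : Fin (k + 1) → α) :
    interiorRanks ρ f = ∅ := by
  simp only [interiorRanks, image_eq_empty, filter_eq_empty_iff]
  intro i _ ⟨h0, hl⟩
  apply h0
  ext
  have := Fin.val_ne_of_ne hl
  simp only [Fin.val_last] at this
  simp only [Fin.val_zero]
  omega

theorem rank_one_mem_interiorRanks {k : ℕ} (f : Fin (k + 3) → α) :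
    ρ (f 1) ∈ interiorRanks ρ f := by
  refine mem_image.2 ⟨1, mem_filter.2 ⟨mem_univ _, Fin.zero_lt_one.ne', ?_⟩, rfl⟩
  simp [Fin.ext_iff]

theorem interiorRanks_cons {k : ℕ} (x : α) (g : Fin (k + 2) → α) :
    interiorRanks ρ (Fin.cons x g : Fin (k + 3) → α) =
      insert (ρ (g 0)) (interiorRanks ρ g) := by
  ext r
  simp only [interiorRanks, mem_image, mem_filter, mem_univ, true_and, mem_insert]
  rw [Fin.exists_fin_succ, Fin.exists_fin_succ (n := k + 1), Fin.exists_fin_succ (n := k + 1)]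
  simp only [Fin.cons_zero, Fin.cons_succ, ne_eq, not_true_eq_false, false_and, false_or,
    Fin.succ_ne_zero, not_false_eq_true, true_and, ← Fin.succ_last, Fin.succ_inj, eq_comm]

theorem chainZeta_cons {k : ℕ} (x : α) (g : Fin (k + 1) → α) :
    chainZeta ζ (Fin.cons x g : Fin (k + 2) → α) = ζ x (g 0) * chainZeta ζ g := by
  simp only [chainZeta, List.ofFn_succ, List.prod_cons]
  rfl

variable [PartialOrder α]

theorem isChainFrom_cons_iff {k : ℕ} (x z : α) (g : Fin (k + 1) → α) :
    IsChainFrom (Fin.cons x g : Fin (k + 2) → α) x z ↔ x < g 0 ∧ IsChainFrom g (g 0) z := by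
  simp only [IsChainFrom, Fin.strictMono_cons, Fin.cons_zero, ← Fin.succ_last, Fin.cons_succ,
    true_and]
  exact ⟨fun ⟨⟨hx, hg⟩, hz⟩ => ⟨hx 0, hg, hz⟩, fun ⟨hx, hg, hz⟩ =>
    ⟨⟨fun j => hx.trans_le (hg.monotone (Fin.zero_le j)), hg⟩, hz⟩⟩

theorem sum_mul_ite_isChainFrom {k : ℕ} (w : α → ℚ) (z : α) (s : Finset α)
    (g : Fin (k + 1) → α) (P : Prop) [Decidable P] (c : ℚ) :
    ∑ y ∈ s, w y * (if IsChainFrom g y z ∧ P then c else 0) =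
      if g 0 ∈ s ∧ IsChainFrom g (g 0) z ∧ P then w (g 0) * c else 0 := by
  have h : ∀ y, w y * (if IsChainFrom g y z ∧ P then c else 0) =
      if g 0 = y then (if IsChainFrom g (g 0) z ∧ P then w (g 0) * c else 0) else 0 := by
    intro y
    by_cases hy : g 0 = y
    · subst hy
      simp only [if_true, mul_ite, mul_zero]
    · rw [if_neg hy, if_neg fun h => hy h.1.2.1, mul_zero]
  rw [sum_congr rfl fun y _ => h y, sum_ite_eq]
  exact (ite_and _ _ _ _).symm

theorem IsQuasiGraded.le_of_zeta_ne_zero (hq : IsQuasiGraded ρ ζ) {x y : α} (h : ζ x y ≠ 0) :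
    x ≤ y :=
  not_not.1 fun hxy => h (hq.2.2 x y hxy)

theorem IsQuasiGraded.zeta_eq_zero_of_not_lt (hq : IsQuasiGraded ρ ζ) {x y : α}
    (h : ρ x < ρ y) (hxy : ¬ x < y) : ζ x y = 0 := by
  by_contra hζ
  exact hxy ((hq.le_of_zeta_ne_zero hζ).lt_of_ne fun e => h.ne (congrArg ρ e))

theorem IsQuasiGraded.eq_of_le_of_rank_eq (hq : IsQuasiGraded ρ ζ) {x y : α} (hxy : x ≤ y)
    (h : ρ x = ρ y) : x = y :=
  hxy.eq_or_lt.resolve_right fun hlt => (hq.1 hlt).ne h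

theorem IsQuasiGraded.rank_lt_of_mem_interiorRanks (hq : IsQuasiGraded ρ ζ) {k : ℕ}
    {f : Fin (k + 1) → α} (hf : StrictMono f) {t : ℕ} (ht : t ∈ interiorRanks ρ f) :
    ρ (f 0) < t := by
  obtain ⟨i, hi, rfl⟩ := mem_image.1 ht
  exact hq.1 (hf (Fin.pos_iff_ne_zero.2 (mem_filter.1 hi).2.1))

end Chains

section FlagF

variable [Fintype α] [PartialOrder α] {ρ : α → ℕ} {ζ : α → α → ℚ}

def flagFOfLength (ρ : α → ℕ) (ζ : α → α → ℚ) (x z : α) (S : Finset ℕ) (k : ℕ) :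
    ℚ :=
  ∑ f : Fin (k + 1) → α,
    if IsChainFrom f x z ∧ interiorRanks ρ f = S then chainZeta ζ f else 0

theorem flagF_eq_sum_flagFOfLength (x z : α) (S : Finset ℕ) :
    flagF ρ ζ x z S = ∑ k ∈ range (Fintype.card α), flagFOfLength ρ ζ x z S k :=
  rfl

theorem flagFOfLength_eq_zero_of_card_le {k : ℕ} (hk : Fintype.card α ≤ k) (x z : α)
    (S : Finset ℕ) : flagFOfLength ρ ζ x z S k = 0 := by
  refine sum_eq_zero fun f _ => if_neg fun ⟨hf, _⟩ => ?_
  have := Fintype.card_le_of_injective f hf.1.injective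
  simp only [Fintype.card_fin] at this
  omega

theorem flagF_eq_sum_range {N : ℕ} (hN : Fintype.card α ≤ N) (x z : α) (S : Finset ℕ) :
    flagF ρ ζ x z S = ∑ k ∈ range N, flagFOfLength ρ ζ x z S k :=
  sum_subset (range_subset_range.2 hN) fun _ _ hk =>
    flagFOfLength_eq_zero_of_card_le (by simpa using hk) x z S

theorem flagFOfLength_succ (x z : α) (S : Finset ℕ) (k : ℕ) :
    flagFOfLength ρ ζ x z S (k + 1) = ∑ g : Fin (k + 1) → α,
      if IsChainFrom (Fin.cons x g : Fin (k + 2) → α) x z ∧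
          interiorRanks ρ (Fin.cons x g : Fin (k + 2) → α) = S
        then ζ x (g 0) * chainZeta ζ g else 0 := by
  rw [flagFOfLength, ← (Fin.consEquiv fun _ => α).sum_comp, Fintype.sum_prod_type,
    Fintype.sum_eq_single x]
  · exact Fintype.sum_congr _ _ fun g => by rw [← chainZeta_cons]; rfl
  · intro a ha
    refine sum_eq_zero fun g _ => if_neg fun ⟨hc, _⟩ => ha ?_
    simpa using hc.2.1

theorem IsQuasiGraded.flagFOfLength_succ_insert (hq : IsQuasiGraded ρ ζ) {x z : α} {m : ℕ}
    {T : Finset ℕ} (hxm : ρ x < m) (hmz : m < ρ z) (hT : ∀ t ∈ T, m < t) (k : ℕ) :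
    flagFOfLength ρ ζ x z (insert m T) (k + 1) =
      ∑ y with ρ y = m, ζ x y * flagFOfLength ρ ζ y z T k := by
  rw [flagFOfLength_succ]
  simp only [flagFOfLength, mul_sum]
  rw [sum_comm]
  refine Fintype.sum_congr _ _ fun g => ?_
  rw [sum_mul_ite_isChainFrom]
  simp only [mem_filter, mem_univ, true_and]
  cases k with
  | zero =>
    rw [interiorRanks_eq_empty le_rfl, if_neg fun h => insert_ne_empty m T h.2.symm,
      if_neg fun ⟨hm, hc, _⟩ => hmz.ne (hm ▸ hc.2.2 ▸ rfl)]
  | succ k =>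
    by_cases hc : IsChainFrom g (g 0) z
    · have hins := insert_eq_insert_iff_of_forall_lt
        (fun t => hq.rank_lt_of_mem_interiorRanks hc.1) hT
      simp only [interiorRanks_cons, isChainFrom_cons_iff, hins, hc, and_true, true_and]
      by_cases hx : x < g 0
      · simp only [hx, true_and]
      · simp only [hx, false_and, if_false]
        split_ifs with h
        · rw [hq.zeta_eq_zero_of_not_lt (h.1 ▸ hxm) hx, zero_mul]
        · rfl
    · rw [isChainFrom_cons_iff, if_neg fun h => hc h.1.2, if_neg fun h => hc h.2.1]

theorem IsQuasiGraded.flagF_insert (hq : IsQuasiGraded ρ ζ) {x z : α} {m : ℕ}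
    {T : Finset ℕ} (hxm : ρ x < m) (hmz : m < ρ z) (hT : ∀ t ∈ T, m < t) :
    flagF ρ ζ x z (insert m T) = ∑ y with ρ y = m, ζ x y * flagF ρ ζ y z T := by
  have h0 : flagFOfLength ρ ζ x z (insert m T) 0 = 0 :=
    sum_eq_zero fun f _ => if_neg fun h =>
      insert_ne_empty m T (h.2.symm.trans (interiorRanks_eq_empty (Nat.zero_le 1) f))
  rw [flagF_eq_sum_range (Nat.le_succ (Fintype.card α)), sum_range_succ', h0, add_zero]
  simp only [hq.flagFOfLength_succ_insert hxm hmz hT, flagF_eq_sum_flagFOfLength, mul_sum]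
  exact sum_comm

theorem IsQuasiGraded.flagF_empty (hq : IsQuasiGraded ρ ζ) {x z : α} (hxz : x ≠ z) :
    flagF ρ ζ x z ∅ = ζ x z := by
  have hcard : 1 < Fintype.card α := Fintype.one_lt_card_iff.2 ⟨x, z, hxz⟩
  rw [flagF_eq_sum_flagFOfLength, sum_eq_single_of_mem 1 (mem_range.2 hcard)]
  · rw [flagFOfLength_succ, Fintype.sum_eq_single (fun _ => z)]
    · by_cases hlt : x < z
      · have hconst : IsChainFrom (fun _ : Fin 1 => z) z z :=
          ⟨fun i j hij => absurd hij (by rw [Fin.eq_zero i, Fin.eq_zero j]; exact lt_irrefl _),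
            rfl, rfl⟩
        rw [if_pos ⟨(isChainFrom_cons_iff x z _).2 ⟨hlt, hconst⟩,
          interiorRanks_eq_empty le_rfl _⟩]
        simp [chainZeta]
      · simp [isChainFrom_cons_iff, hlt, hq.2.2 x z fun hle => hlt (hle.lt_of_ne hxz)]
    · intro g hg
      refine if_neg fun ⟨hc, _⟩ => hg (funext fun i => ?_)
      rw [Fin.eq_zero i]
      exact ((isChainFrom_cons_iff x z g).1 hc).2.2.2
  · intro k _ hk1
    rcases k with _ | _ | k
    · exact sum_eq_zero fun f _ => if_neg fun ⟨hc, _⟩ => hxz (hc.2.1.symm.trans hc.2.2)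
    · exact absurd rfl hk1
    · refine sum_eq_zero fun f _ => if_neg fun ⟨_, hS⟩ => ?_
      simpa [hS] using rank_one_mem_interiorRanks (ρ := ρ) f

theorem IsQuasiGraded.flagF_union_insert (hq : IsQuasiGraded ρ ζ) {s : ℕ} {A B : Finset ℕ}
    {x z : α} (hxs : ρ x < s) (hsz : s < ρ z) (hA : A ⊆ Ioo (ρ x) s)
    (hB : B ⊆ Ioo s (ρ z)) :
    flagF ρ ζ x z (A ∪ insert s B) =
      ∑ y with ρ y = s, flagF ρ ζ x y A * flagF ρ ζ y z B := by
  have hsB : ∀ t ∈ B, s < t := fun t ht => (mem_Ioo.1 (hB ht)).1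
  induction A using induction_on_min generalizing x with
  | empty =>
    rw [empty_union, hq.flagF_insert hxs hsz hsB]
    refine sum_congr rfl fun y hy => ?_
    rw [hq.flagF_empty fun e => hxs.ne ((mem_filter.1 hy).2 ▸ congrArg ρ e)]
  | insert a A ha ih =>
    have hax := mem_Ioo.1 (hA (mem_insert_self a A))
    have haA : ∀ t ∈ A ∪ insert s B, a < t := by
      intro t ht
      rcases mem_union.1 ht with ht | ht
      · exact ha t ht
      rcases mem_insert.1 ht with rfl | ht
      · exact hax.2
      · exact hax.2.trans (hsB t ht)
    rw [insert_union, hq.flagF_insert hax.1 (hax.2.trans hsz) haA]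
    calc ∑ w with ρ w = a, ζ x w * flagF ρ ζ w z (A ∪ insert s B)
        = ∑ w with ρ w = a, ζ x w *
            ∑ y with ρ y = s, flagF ρ ζ w y A * flagF ρ ζ y z B := by
          refine sum_congr rfl fun w hw => ?_
          have hw : ρ w = a := (mem_filter.1 hw).2
          refine congrArg _ (ih (hw ▸ hax.2) fun t ht => ?_)
          exact mem_Ioo.2 ⟨hw ▸ ha t ht, (mem_Ioo.1 (hA (mem_insert_of_mem ht))).2⟩
      _ = ∑ y with ρ y = s, flagF ρ ζ x y (insert a A) * flagF ρ ζ y z B := by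
          simp only [mul_sum]
          rw [sum_comm]
          refine sum_congr rfl fun y hy => ?_
          have hy : ρ y = s := (mem_filter.1 hy).2
          rw [hq.flagF_insert hax.1 (hy ▸ hax.2) ha, sum_mul]
          exact sum_congr rfl fun w _ => by ring

theorem IsQuasiGraded.sum_powerset_neg_one_pow_card_insert_mul_flagF
    (hq : IsQuasiGraded ρ ζ) {x z : α} {m : ℕ} (hxm : ρ x < m) (hmz : m < ρ z) :
    ∑ T ∈ (Ioo m (ρ z)).powerset,
        (-1 : ℚ) ^ (insert m T).card * flagF ρ ζ x z (insert m T) =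
      -∑ y with ρ y = m, ζ x y *
        ∑ T ∈ (Ioo (ρ y) (ρ z)).powerset, (-1 : ℚ) ^ T.card * flagF ρ ζ y z T := by
  have hterm : ∀ T ∈ (Ioo m (ρ z)).powerset,
      (-1 : ℚ) ^ (insert m T).card * flagF ρ ζ x z (insert m T) =
        -∑ y with ρ y = m, ζ x y * ((-1) ^ T.card * flagF ρ ζ y z T) := by
    intro T hT
    have hmT : ∀ t ∈ T, m < t := fun t ht => (mem_Ioo.1 (mem_powerset.1 hT ht)).1
    rw [card_insert_of_notMem fun hmem => (hmT m hmem).false, pow_succ,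
      hq.flagF_insert hxm hmz hmT, mul_sum, ← sum_neg_distrib]
    exact sum_congr rfl fun y _ => by ring
  rw [sum_congr rfl hterm, sum_neg_distrib, sum_comm]
  refine congrArg _ (sum_congr rfl fun y hy => ?_)
  rw [← mul_sum, (mem_filter.1 hy).2]

end FlagF

section Eulerian

variable [Fintype α] [PartialOrder α] {ρ : α → ℕ} {ζ : α → α → ℚ}

theorem IsEulerian.sum_neg_one_pow_rank_mul_eq_zero (hq : IsQuasiGraded ρ ζ)
    (hE : IsEulerian ρ ζ) {x z : α} (hxz : x ≠ z) :
    ∑ y, (-1 : ℚ) ^ ρ y * (ζ x y * ζ y z) = 0 := by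
  have hbetween : ∀ y, ζ x y * ζ y z ≠ 0 → x ≤ y ∧ y ≤ z := fun y h =>
    ⟨hq.le_of_zeta_ne_zero (left_ne_zero_of_mul h),
      hq.le_of_zeta_ne_zero (right_ne_zero_of_mul h)⟩
  by_cases hle : x ≤ z
  · have hEul := hE x z hle
    rw [EulerianAt, iaDelta, if_neg hxz] at hEul
    rw [← sum_filter_of_ne fun y _ h => hbetween y (right_ne_zero_of_mul h)]
    calc ∑ y with x ≤ y ∧ y ≤ z, (-1 : ℚ) ^ ρ y * (ζ x y * ζ y z)
        = (∑ y with x ≤ y ∧ y ≤ z, (-1 : ℚ) ^ (ρ y - ρ x) * ζ x y * ζ y z) *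
            (-1) ^ ρ x := by
          rw [sum_mul]
          refine sum_congr rfl fun y hy => ?_
          rw [← pow_sub_mul_pow (-1 : ℚ) (hq.1.monotone (mem_filter.1 hy).2.1)]
          ring
      _ = 0 := by rw [hEul, zero_mul]
  · refine sum_eq_zero fun y _ => by_contra fun h => hle ?_
    obtain ⟨hxy, hyz⟩ := hbetween y (right_ne_zero_of_mul h)
    exact hxy.trans hyz

theorem IsEulerian.sum_rank_mem_Ioo (hq : IsQuasiGraded ρ ζ) (hE : IsEulerian ρ ζ) {x z : α}
    (h : ρ x < ρ z) :
    ∑ y with ρ y ∈ Ioo (ρ x) (ρ z), (-1 : ℚ) ^ ρ y * (ζ x y * ζ y z) =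
      -((-1) ^ ρ x + (-1) ^ ρ z) * ζ x z := by
  have hxz : x ≠ z := fun e => h.ne (congrArg ρ e)
  have hends : ∑ y with ρ y ∉ Ioo (ρ x) (ρ z), (-1 : ℚ) ^ ρ y * (ζ x y * ζ y z) =
      ((-1) ^ ρ x + (-1) ^ ρ z) * ζ x z := by
    rw [← sum_subset (s₁ := {x, z}), sum_pair hxz, hq.2.1, hq.2.1]
    · ring
    · intro y hy
      simp only [mem_insert, mem_singleton] at hy
      rcases hy with rfl | rfl <;> simp
    · intro y hy hxyz
      simp only [mem_filter, mem_univ, true_and, mem_Ioo, not_and_or, not_lt] at hy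
      simp only [mem_insert, mem_singleton, not_or] at hxyz
      by_contra hne
      have hxy := hq.le_of_zeta_ne_zero (left_ne_zero_of_mul (right_ne_zero_of_mul hne))
      have hyz := hq.le_of_zeta_ne_zero (right_ne_zero_of_mul (right_ne_zero_of_mul hne))
      have h1 := hq.1.monotone hxy
      have h2 := hq.1.monotone hyz
      rcases hy with hy | hy
      · exact hxyz.1 (hq.eq_of_le_of_rank_eq hxy (by omega)).symm
      · exact hxyz.2 (hq.eq_of_le_of_rank_eq hyz (by omega))
  have htotal := sum_filter_add_sum_filter_not univ (ρ · ∈ Ioo (ρ x) (ρ z))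
    fun y => (-1 : ℚ) ^ ρ y * (ζ x y * ζ y z)
  rw [hE.sum_neg_one_pow_rank_mul_eq_zero hq hxz, hends] at htotal
  linear_combination htotal

theorem IsEulerian.sum_powerset_neg_one_pow_card_mul_flagF (hq : IsQuasiGraded ρ ζ)
    (hE : IsEulerian ρ ζ) {x z : α} (h : ρ x < ρ z) :
    ∑ T ∈ (Ioo (ρ x) (ρ z)).powerset, (-1 : ℚ) ^ T.card * flagF ρ ζ x z T =
      -((-1) ^ ρ x * (-1) ^ ρ z) * ζ x z := by
  induction hd : ρ z - ρ x using Nat.strong_induction_on generalizing x with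
  | _ d ih =>
    have hstep : ∀ m ∈ Ioo (ρ x) (ρ z),
        ∑ T ∈ {t ∈ Ioo (ρ x) (ρ z) | m < t}.powerset,
          (-1 : ℚ) ^ (insert m T).card * flagF ρ ζ x z (insert m T) =
        (-1) ^ ρ z * ∑ y with ρ y = m, (-1) ^ ρ y * (ζ x y * ζ y z) := by
      intro m hm
      have hm' := mem_Ioo.1 hm
      rw [Ioo_filter_gt, max_eq_right hm'.1.le,
        hq.sum_powerset_neg_one_pow_card_insert_mul_flagF hm'.1 hm'.2, mul_sum,
        ← sum_neg_distrib]
      refine sum_congr rfl fun y hy => ?_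
      have hy : ρ y = m := (mem_filter.1 hy).2
      rw [ih (ρ z - ρ y) (by omega) (by omega) rfl]
      ring
    rw [sum_powerset_eq_add_sum_insert_min, card_empty, pow_zero, one_mul,
      hq.flagF_empty fun e => h.ne (congrArg ρ e), sum_congr rfl hstep, ← mul_sum,
      sum_fiberwise_eq_sum_filter, hE.sum_rank_mem_Ioo hq h]
    linear_combination (-ζ x z) * neg_one_pow_mul_self (R := ℚ) (ρ z)

theorem IsEulerian.sum_superset_neg_one_pow_card_mul_flagF (hq : IsQuasiGraded ρ ζ)
    (hE : IsEulerian ρ ζ) {x z : α} (h : ρ x < ρ z) {S : Finset ℕ}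
    (hS : S ⊆ Ioo (ρ x) (ρ z)) :
    ∑ T ∈ (Ioo (ρ x) (ρ z)).powerset with S ⊆ T, (-1 : ℚ) ^ T.card * flagF ρ ζ x z T =
      -((-1) ^ ρ x * (-1) ^ ρ z) * flagF ρ ζ x z S := by
  induction S using induction_on_min generalizing x with
  | empty =>
    rw [filter_true_of_mem fun T _ => empty_subset T,
      hE.sum_powerset_neg_one_pow_card_mul_flagF hq h, hq.flagF_empty fun e => h.ne (congrArg ρ e)]
  | insert s S hs ih =>
    have hsI := hS (mem_insert_self s S)
    have hs' := mem_Ioo.1 hsI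
    rw [sum_powerset_superset_insert_eq_sum_sum _ hsI hs, Ioo_filter_lt, min_eq_right hs'.2.le,
      Ioo_filter_gt, max_eq_right hs'.1.le]
    calc ∑ A ∈ (Ioo (ρ x) s).powerset, ∑ B ∈ (Ioo s (ρ z)).powerset with S ⊆ B,
          (-1 : ℚ) ^ (A ∪ insert s B).card * flagF ρ ζ x z (A ∪ insert s B)
        = ∑ A ∈ (Ioo (ρ x) s).powerset, ∑ B ∈ (Ioo s (ρ z)).powerset with S ⊆ B,
            ∑ y with ρ y = s,
              -(((-1 : ℚ) ^ A.card * flagF ρ ζ x y A) *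
                ((-1) ^ B.card * flagF ρ ζ y z B)) := by
          refine sum_congr rfl fun A hA => sum_congr rfl fun B hB => ?_
          have hA := mem_powerset.1 hA
          have hB := mem_powerset.1 (mem_filter.1 hB).1
          have hdisj : Disjoint A (insert s B) := by
            refine disjoint_left.2 fun t htA htB => ?_
            have := mem_Ioo.1 (hA htA)
            rcases mem_insert.1 htB with rfl | htB
            · exact this.2.false
            · exact (this.2.trans (mem_Ioo.1 (hB htB)).1).false
          rw [card_union_of_disjoint hdisj,
            card_insert_of_notMem fun hsB => (mem_Ioo.1 (hB hsB)).1.false,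
            hq.flagF_union_insert hs'.1 hs'.2 hA hB, mul_sum]
          exact sum_congr rfl fun y _ => by ring
      _ = -∑ y with ρ y = s,
            (∑ A ∈ (Ioo (ρ x) s).powerset, (-1 : ℚ) ^ A.card * flagF ρ ζ x y A) *
            ∑ B ∈ (Ioo s (ρ z)).powerset with S ⊆ B,
              (-1 : ℚ) ^ B.card * flagF ρ ζ y z B := by
          simp only [sum_mul_sum, sum_neg_distrib]
          exact congrArg _ (sum_comm.trans (sum_congr rfl fun A _ => sum_comm)).symm
      _ = -((-1) ^ ρ x * (-1) ^ ρ z) * flagF ρ ζ x z (insert s S) := by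
          rw [hq.flagF_insert hs'.1 hs'.2 hs, mul_sum, ← sum_neg_distrib]
          refine sum_congr rfl fun y hy => ?_
          obtain rfl : ρ y = s := (mem_filter.1 hy).2
          have hSy : S ⊆ Ioo (ρ y) (ρ z) := fun t ht =>
            mem_Ioo.2 ⟨hs t ht, (mem_Ioo.1 (hS (mem_insert_of_mem ht))).2⟩
          rw [hE.sum_powerset_neg_one_pow_card_mul_flagF hq hs'.1, ih hs'.2 hSy]
          linear_combination (-(ζ x y * flagF ρ ζ y z S * (-1) ^ ρ x * (-1) ^ ρ z)) *
            neg_one_pow_mul_self (R := ℚ) (ρ y)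

end Eulerian

/-- for an Eulerian quasi-graded poset of rank `n+1`,
the flag `h̄`-vector satisfies `h̄_S = h̄_{S̄}`. -/
theorem flagH_complement {α : Type*} [Fintype α] [PartialOrder α] [BoundedOrder α]
    (ρ : α → ℕ) (ζ : α → α → ℚ) (hq : IsQuasiGraded ρ ζ) (hE : IsEulerian ρ ζ)
    (n : ℕ) (h0 : ρ (⊥ : α) = 0) (h1 : ρ (⊤ : α) = n + 1)
    (S : Finset ℕ) (hS : S ⊆ Finset.Icc 1 n) :
    flagH ρ ζ (⊥ : α) ⊤ S = flagH ρ ζ (⊥ : α) ⊤ (Finset.Icc 1 n \ S) := by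
  have hI : Ioo (ρ (⊥ : α)) (ρ ⊤) = Icc 1 n := by
    ext t
    simp only [h0, h1, mem_Ioo, mem_Icc]
    omega
  refine sum_powerset_neg_one_pow_sub_mul_eq_sdiff _ _ (fun T hT => ?_) hS
  have hdual := hE.sum_superset_neg_one_pow_card_mul_flagF hq (by omega) (hI ▸ hT)
  rw [hI, h0, h1] at hdual
  rw [hdual, Nat.card_Icc, Nat.add_sub_cancel, pow_succ]
  ring
end
end

section
/- Let (P,ρ,ζ̄) be an Eulerian quasi-graded poset with 0̂ and 1̂. Then its ab-index Ψ(P,ρ,ζ̄) can be written (uniquely) as a polynomial in the noncommutative variables c = a + b and d = ab + ba. -/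
open scoped Classical
open Finset

noncomputable section

variable {α : Type*}

/-!
Write `e = a - b` and `H(x,y) = ζ̄(x,y) e^{ρ(x,y)-1}`. Splitting off the last element of a chain
gives `Ψ(x,z) = H(x,z) + ∑_{x<y<z} Ψ(x,y) b H(y,z)`, and associativity of this convolution turns it
into the first-step recursion `Ψ(x,z) = H(x,z) + ∑ H(x,y) b Ψ(y,z)`. For the signed weights
`H⁻(x,y) = (-1)^{ρ(x,y)} H(x,y)`, the Eulerian relation
`∑_{x≤y≤z} (-1)^{ρ(x,y)} ζ̄(x,y) ζ̄(y,z) = δ(x,z)` turns the last-step recursion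
into `Ψ(x,z) = -H⁻(x,z) - ∑ H⁻(x,y) a Ψ(y,z)`. Adding the two expressions,
`2Ψ(x,z) = (H - H⁻)(x,z) + ∑ (H(x,y) b - H⁻(x,y) a) Ψ(y,z)`, and all these coefficients are
polynomials in `c` and `d`: `e² = c² - 2d`, and `e^{m-1} (b - (-1)^m a)` is `-e^m` for even `m` and
`e^{m-1} c` for odd `m`. Induction on intervals finishes the proof.
-/

abbrev cdSubalgebra : Subalgebra ℚ QA := Algebra.adjoin ℚ {cvar, dvar}

lemma cvar_mem_cdSubalgebra : cvar ∈ cdSubalgebra := Algebra.subset_adjoin (by simp)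

lemma dvar_mem_cdSubalgebra : dvar ∈ cdSubalgebra := Algebra.subset_adjoin (by simp)

lemma sub_sq_mem_cdSubalgebra : (av - bv) ^ 2 ∈ cdSubalgebra := by
  have h : (av - bv) ^ 2 = cvar * cvar - 2 • dvar := by
    simp only [cvar, dvar]; noncomm_ring
  rw [h]
  exact sub_mem (mul_mem cvar_mem_cdSubalgebra cvar_mem_cdSubalgebra)
    (nsmul_mem dvar_mem_cdSubalgebra 2)

lemma sub_pow_mem_cdSubalgebra_of_even {m : ℕ} (hm : Even m) :
    (av - bv) ^ m ∈ cdSubalgebra := by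
  obtain ⟨k, rfl⟩ := hm
  rw [← two_mul, pow_mul]
  exact pow_mem sub_sq_mem_cdSubalgebra k

lemma one_sub_neg_one_pow_smul_mem_cdSubalgebra (m : ℕ) :
    (1 - (-1 : ℚ) ^ m) • (av - bv) ^ (m - 1) ∈ cdSubalgebra := by
  rcases Nat.even_or_odd m with hm | hm
  · simp [hm.neg_one_pow]
  · refine Subalgebra.smul_mem _ (sub_pow_mem_cdSubalgebra_of_even ?_) _
    obtain ⟨k, rfl⟩ := hm
    simp

lemma sub_pow_pred_mul_mem_cdSubalgebra {m : ℕ} (hm : m ≠ 0) :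
    (av - bv) ^ (m - 1) * (bv - (-1 : ℚ) ^ m • av) ∈ cdSubalgebra := by
  rcases Nat.even_or_odd m with he | ho
  · have h : (av - bv) ^ (m - 1) * (bv - (-1 : ℚ) ^ m • av) = -(av - bv) ^ m := by
      rw [he.neg_one_pow, one_smul, ← neg_sub av, mul_neg, ← pow_succ, Nat.sub_add_cancel
        (Nat.one_le_iff_ne_zero.mpr hm)]
    rw [h]
    exact neg_mem (sub_pow_mem_cdSubalgebra_of_even he)
  · have h : (av - bv) ^ (m - 1) * (bv - (-1 : ℚ) ^ m • av) = (av - bv) ^ (m - 1) * cvar := by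
      rw [ho.neg_one_pow, neg_one_smul, sub_neg_eq_add, cvar, add_comm]
    rw [h]
    refine mul_mem (sub_pow_mem_cdSubalgebra_of_even ?_) cvar_mem_cdSubalgebra
    obtain ⟨k, rfl⟩ := ho
    simp

def stepWt (ρ : α → ℕ) (ζ : α → α → ℚ) (x y : α) : QA := ζ x y • (av - bv) ^ (ρ y - ρ x - 1)

def signedZeta (ρ : α → ℕ) (ζ : α → α → ℚ) (x y : α) : ℚ := (-1) ^ (ρ y - ρ x) * ζ x y

section Tuples

variable (ρ : α → ℕ) (ζ : α → α → ℚ)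

lemma chainZeta_snoc {k : ℕ} (g : Fin (k + 1) → α) (v : α) :
    chainZeta ζ (Fin.snoc g v : Fin (k + 1 + 1) → α) =
      chainZeta ζ g * ζ (g (Fin.last k)) v := by
  simp only [chainZeta, List.ofFn_succ', List.prod_concat, Fin.succ_castSucc, Fin.snoc_castSucc,
    Fin.succ_last, Fin.snoc_last]

lemma chainWt_snoc {k : ℕ} (g : Fin (k + 1) → α) (v : α) :
    chainWt ρ (Fin.snoc g v : Fin (k + 1 + 1) → α) =
      chainWt ρ g * ((if k = 0 then 1 else bv) * (av - bv) ^ (ρ v - ρ (g (Fin.last k)) - 1)) := by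
  simp only [chainWt, List.ofFn_succ', List.prod_concat, Fin.succ_castSucc, Fin.snoc_castSucc,
    Fin.succ_last, Fin.snoc_last, Fin.val_last, Fin.val_castSucc]

lemma isChainFrom_iff_last [PartialOrder α] {k : ℕ} (g : Fin (k + 1) → α) (x y : α) :
    IsChainFrom g x y ↔ IsChainFrom g x (g (Fin.last k)) ∧ g (Fin.last k) = y := by
  unfold IsChainFrom
  constructor
  · rintro ⟨hg, h0, rfl⟩
    exact ⟨⟨hg, h0, rfl⟩, rfl⟩
  · rintro ⟨⟨hg, h0, -⟩, rfl⟩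
    exact ⟨hg, h0, rfl⟩

lemma isChainFrom_snoc_iff [PartialOrder α] {k : ℕ} (g : Fin (k + 1) → α) (v x z : α) :
    IsChainFrom (Fin.snoc g v : Fin (k + 1 + 1) → α) x z ↔
      IsChainFrom g x (g (Fin.last k)) ∧ g (Fin.last k) < v ∧ v = z := by
  have h0 : (Fin.snoc g v : Fin (k + 1 + 1) → α) 0 = g 0 := Fin.snoc_castSucc (i := 0) ..
  simp only [IsChainFrom, Fin.strictMono_iff_lt_succ, Fin.forall_fin_succ', Fin.succ_castSucc,
    Fin.snoc_castSucc, Fin.succ_last, Fin.snoc_last, h0]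
  tauto

lemma sum_tuple_succ_eq_sum_snoc [Fintype α] {M : Type*} [AddCommMonoid M] {k : ℕ}
    (F : (Fin (k + 1 + 1) → α) → M) :
    ∑ f, F f = ∑ g : Fin (k + 1) → α, ∑ v, F (Fin.snoc g v) := by
  rw [← Fintype.sum_equiv (Fin.snocEquiv fun _ => α) (fun p => F (Fin.snoc p.2 p.1)) F
    fun _ => rfl, Fintype.sum_prod_type, sum_comm]

end Tuples

section Intervals

variable [Fintype α] [PartialOrder α]

def openInterval (x z : α) : Finset α := univ.filter fun y => x < y ∧ y < z

@[simp] lemma mem_openInterval {x y z : α} : y ∈ openInterval x z ↔ x < y ∧ y < z := by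
  simp [openInterval]

lemma sum_openInterval_comm {M : Type*} [AddCommMonoid M] (x z : α) (F : α → α → M) :
    ∑ y ∈ openInterval x z, ∑ u ∈ openInterval x y, F u y =
      ∑ u ∈ openInterval x z, ∑ y ∈ openInterval u z, F u y :=
  sum_comm' fun y u => by
    simp only [mem_openInterval]
    constructor <;> rintro ⟨⟨h₁, h₂⟩, h₃, h₄⟩ <;> refine ⟨⟨?_, ?_⟩, ?_, ?_⟩ <;> order

theorem recursion_first_of_recursion_last {R : Type*} [Semiring R] {Ψ H : α → α → R} (m : R)
    (hΨ : ∀ x z, x < z → Ψ x z = H x z + ∑ y ∈ openInterval x z, Ψ x y * m * H y z)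
    {x z : α} (hxz : x < z) :
    Ψ x z = H x z + ∑ y ∈ openInterval x z, H x y * m * Ψ y z := by
  induction z using WellFoundedLT.induction with
  | ind z ih =>
    rw [hΨ x z hxz]
    congr 1
    calc ∑ y ∈ openInterval x z, Ψ x y * m * H y z
        = ∑ y ∈ openInterval x z, (H x y * m * H y z +
            ∑ u ∈ openInterval x y, H x u * m * (Ψ u y * m * H y z)) := by
          refine sum_congr rfl fun y hy => ?_
          obtain ⟨hxy, hyz⟩ := mem_openInterval.mp hy
          rw [ih y hyz hxy, add_mul, add_mul, sum_mul, sum_mul]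
          simp only [mul_assoc]
      _ = ∑ u ∈ openInterval x z, H x u * m * (H u z +
            ∑ y ∈ openInterval u z, Ψ u y * m * H y z) := by
          rw [sum_add_distrib, sum_openInterval_comm, ← sum_add_distrib]
          simp only [mul_add, mul_sum]
      _ = ∑ u ∈ openInterval x z, H x u * m * Ψ u z :=
          sum_congr rfl fun u hu => by rw [← hΨ u z (mem_openInterval.mp hu).2]

end Intervals

section Chains

variable [Fintype α] [PartialOrder α] (ρ : α → ℕ) (ζ : α → α → ℚ)

def chainSum (x z : α) (k : ℕ) : QA :=
  ∑ f : Fin (k + 1) → α, if IsChainFrom f x z then chainZeta ζ f • chainWt ρ f else 0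

lemma chainSum_eq_zero_of_card_le {k : ℕ} (hk : Fintype.card α ≤ k) (x z : α) :
    chainSum ρ ζ x z k = 0 :=
  sum_eq_zero fun f _ => if_neg fun hf => by
    have := Fintype.card_le_of_injective f hf.1.injective
    simp only [Fintype.card_fin] at this
    omega

lemma abIndex_eq_sum_range_chainSum {M : ℕ} (hM : Fintype.card α ≤ M) (x z : α) :
    abIndex ρ ζ x z = ∑ k ∈ range M, chainSum ρ ζ x z k := by
  obtain ⟨j, rfl⟩ := Nat.exists_eq_add_of_le hM
  rw [sum_range_add, sum_eq_zero (s := range j) fun k _ =>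
    chainSum_eq_zero_of_card_le ρ ζ (by omega) x z, add_zero]
  rfl

lemma chainSum_zero (x z : α) : chainSum ρ ζ x z 0 = if x = z then 1 else 0 := by
  rw [chainSum, ← (Equiv.funUnique (Fin 1) α).symm.sum_comp]
  rcases eq_or_ne x z with rfl | h
  · simp [IsChainFrom, chainZeta, chainWt, Subsingleton.strictMono]
  · simp [IsChainFrom, chainZeta, chainWt, Subsingleton.strictMono, h]

lemma chainSum_self_of_ne_zero {k : ℕ} (hk : k ≠ 0) (x : α) : chainSum ρ ζ x x k = 0 :=
  sum_eq_zero fun f _ => if_neg fun ⟨hf, h0, hl⟩ =>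
    (hf (Fin.lt_def.mpr (by simpa using Nat.pos_of_ne_zero hk))).ne (h0.trans hl.symm)

/-- A chain from `x` to `y` has no step iff `y = x`. -/
lemma chainSum_mul_ite_eq (x y : α) (k : ℕ) (c d : QA) :
    chainSum ρ ζ x y k * (if k = 0 then c else d) =
      chainSum ρ ζ x y k * (if y = x then c else d) := by
  rcases eq_or_ne k 0 with rfl | hk
  · rw [chainSum_zero]
    by_cases h : x = y <;> simp [h, eq_comm]
  · by_cases h : y = x
    · rw [h, chainSum_self_of_ne_zero ρ ζ hk, zero_mul, zero_mul]
    · simp [hk, h]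

lemma chainSum_succ (x z : α) (k : ℕ) :
    chainSum ρ ζ x z (k + 1) = ∑ y ∈ univ.filter (· < z),
      chainSum ρ ζ x y k * (if k = 0 then 1 else bv) * stepWt ρ ζ y z := by
  have hterm : ∀ g : Fin (k + 1) → α, ∀ y ∈ univ.filter (· < z),
      (if IsChainFrom g x y then chainZeta ζ g • chainWt ρ g else 0) *
          (if k = 0 then 1 else bv) * stepWt ρ ζ y z =
        if g (Fin.last k) = y then
          (if IsChainFrom g x (g (Fin.last k)) then
            chainZeta ζ (Fin.snoc g z : Fin (k + 1 + 1) → α) •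
              chainWt ρ (Fin.snoc g z : Fin (k + 1 + 1) → α) else 0) else 0 := by
    intro g y _
    rw [isChainFrom_iff_last g x y]
    rcases em (g (Fin.last k) = y) with rfl | hy
    · by_cases hg : IsChainFrom g x (g (Fin.last k))
      · rw [if_pos ⟨hg, rfl⟩, if_pos rfl, if_pos hg, chainZeta_snoc, chainWt_snoc, stepWt,
          smul_mul_assoc, smul_mul_assoc, mul_smul_comm, smul_smul, mul_assoc]
      · rw [if_neg fun h => hg h.1, if_pos rfl, if_neg hg, zero_mul, zero_mul]
    · rw [if_neg fun h => hy h.2, if_neg hy, zero_mul, zero_mul]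
  simp only [chainSum, sum_mul, sum_tuple_succ_eq_sum_snoc]
  rw [sum_comm (s := univ.filter _)]
  refine sum_congr rfl fun g _ => ?_
  rw [sum_congr rfl (hterm g), sum_ite_eq, Fintype.sum_eq_single z fun v hv =>
    if_neg fun h => hv ((isChainFrom_snoc_iff g v x z).mp h).2.2]
  simp only [isChainFrom_snoc_iff, and_true, mem_filter, mem_univ, true_and, ite_and]
  split_ifs <;> rfl

lemma abIndex_of_not_le {x z : α} (h : ¬ x ≤ z) : abIndex ρ ζ x z = 0 :=
  sum_eq_zero fun _ _ => sum_eq_zero fun _ _ => if_neg fun ⟨hf, h0, hl⟩ =>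
    h (h0 ▸ hl ▸ hf.monotone (Fin.zero_le _))

lemma abIndex_eq_ite_add_sum (x z : α) :
    abIndex ρ ζ x z = (if x = z then 1 else 0) +
      ∑ y ∈ univ.filter (· < z), abIndex ρ ζ x y * (if y = x then 1 else bv) * stepWt ρ ζ y z := by
  rw [abIndex_eq_sum_range_chainSum ρ ζ (Nat.le_succ _), sum_range_succ', chainSum_zero,
    add_comm]
  simp only [chainSum_succ]
  rw [sum_comm]
  refine congrArg _ (sum_congr rfl fun y _ => ?_)
  rw [abIndex_eq_sum_range_chainSum ρ ζ le_rfl, sum_mul, sum_mul]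
  exact sum_congr rfl fun k _ => by rw [chainSum_mul_ite_eq]

lemma abIndex_self (x : α) : abIndex ρ ζ x x = 1 := by
  rw [abIndex_eq_ite_add_sum, if_pos rfl, sum_eq_zero fun y hy => by
    rw [abIndex_of_not_le ρ ζ (mem_filter.mp hy).2.not_ge, zero_mul, zero_mul], add_zero]

lemma abIndex_of_lt {x z : α} (h : x < z) :
    abIndex ρ ζ x z =
      stepWt ρ ζ x z + ∑ y ∈ openInterval x z, abIndex ρ ζ x y * bv * stepWt ρ ζ y z := by
  have hsub : insert x (openInterval x z) ⊆ univ.filter (· < z) := by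
    intro y hy
    rcases mem_insert.mp hy with rfl | hy
    · simpa using h
    · simpa using (mem_openInterval.mp hy).2
  have hx : x ∉ openInterval x z := by simp
  rw [abIndex_eq_ite_add_sum, if_neg h.ne, zero_add, ← sum_subset hsub, sum_insert hx,
    abIndex_self, if_pos rfl, one_mul, one_mul]
  · refine congrArg _ (sum_congr rfl fun y hy => ?_)
    rw [if_neg (mem_openInterval.mp hy).1.ne']
  · intro y hyz hy
    have hxy : ¬ x ≤ y := fun hxy => hy <| by
      rcases hxy.eq_or_lt with rfl | hxy
      · exact mem_insert_self _ _
      · exact mem_insert_of_mem (mem_openInterval.mpr ⟨hxy, (mem_filter.mp hyz).2⟩)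
    rw [abIndex_of_not_le ρ ζ hxy, zero_mul, zero_mul]

lemma abIndex_of_lt' {x z : α} (h : x < z) :
    abIndex ρ ζ x z =
      stepWt ρ ζ x z + ∑ y ∈ openInterval x z, stepWt ρ ζ x y * bv * abIndex ρ ζ y z :=
  recursion_first_of_recursion_last bv (fun _ _ => abIndex_of_lt ρ ζ) h

end Chains

section Eulerian

variable [PartialOrder α] {ρ : α → ℕ} {ζ : α → α → ℚ}

lemma stepWt_mul_sub_mul_stepWt (hρ : StrictMono ρ) (ζ₁ ζ₂ : α → α → ℚ) {x y z : α}
    (hxy : x < y) (hyz : y < z) :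
    stepWt ρ ζ₁ x y * (av - bv) * stepWt ρ ζ₂ y z =
      (ζ₁ x y * ζ₂ y z) • (av - bv) ^ (ρ z - ρ x - 1) := by
  have h₁ := hρ hxy
  have h₂ := hρ hyz
  rw [stepWt, stepWt, smul_mul_assoc, smul_mul_assoc, mul_smul_comm, smul_smul, ← pow_succ,
    ← pow_add]
  congr 2
  omega

variable [Fintype α]

lemma sum_signedZeta_mul_openInterval (hζ : ∀ x, ζ x x = 1) (hE : IsEulerian ρ ζ) {x z : α}
    (hxz : x < z) :
    ∑ y ∈ openInterval x z, signedZeta ρ ζ x y * ζ y z = -ζ x z - signedZeta ρ ζ x z := by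
  have hI : univ.filter (fun y => x ≤ y ∧ y ≤ z) = insert x (insert z (openInterval x z)) := by
    ext y
    simp only [mem_filter, mem_univ, true_and, mem_insert, mem_openInterval]
    constructor
    · rintro ⟨hxy, hyz⟩
      rcases hxy.eq_or_lt with rfl | hxy
      · exact Or.inl rfl
      rcases hyz.eq_or_lt with rfl | hyz
      · exact Or.inr (Or.inl rfl)
      exact Or.inr (Or.inr ⟨hxy, hyz⟩)
    · rintro (rfl | rfl | ⟨hxy, hyz⟩) <;> constructor <;> order
  have hEuler := hE x z hxz.le
  rw [EulerianAt, iaDelta, if_neg hxz.ne, hI, sum_insert (by simp [hxz.ne]),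
    sum_insert (by simp)] at hEuler
  simp only [signedZeta, Nat.sub_self, pow_zero, one_mul, hζ, mul_one] at hEuler ⊢
  linear_combination hEuler

theorem abIndex_add_sum_signed_eq_neg (hρ : StrictMono ρ) (hζ : ∀ x, ζ x x = 1)
    (hE : IsEulerian ρ ζ) {x z : α} (hxz : x < z) :
    abIndex ρ ζ x z + ∑ y ∈ openInterval x z,
        stepWt ρ (signedZeta ρ ζ) x y * av * abIndex ρ ζ y z =
      -stepWt ρ (signedZeta ρ ζ) x z := by
  induction z using WellFoundedLT.induction with
  | ind z ih =>
    have hsplit : ∑ y ∈ openInterval x z, stepWt ρ (signedZeta ρ ζ) x y * av * abIndex ρ ζ y z =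
        ∑ y ∈ openInterval x z, stepWt ρ (signedZeta ρ ζ) x y * av * stepWt ρ ζ y z +
          ∑ u ∈ openInterval x z, (∑ y ∈ openInterval x u,
            stepWt ρ (signedZeta ρ ζ) x y * av * abIndex ρ ζ y u) * bv * stepWt ρ ζ u z := by
      rw [sum_congr rfl fun y hy => by rw [abIndex_of_lt ρ ζ (mem_openInterval.mp hy).2]]
      simp only [mul_add, sum_add_distrib, mul_sum]
      rw [← sum_openInterval_comm]
      simp only [sum_mul, mul_assoc]
    have hIH : ∀ u ∈ openInterval x z, (∑ y ∈ openInterval x u,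
        stepWt ρ (signedZeta ρ ζ) x y * av * abIndex ρ ζ y u) * bv * stepWt ρ ζ u z =
          (-stepWt ρ (signedZeta ρ ζ) x u - abIndex ρ ζ x u) * bv * stepWt ρ ζ u z := by
      intro u hu
      rw [← ih u (mem_openInterval.mp hu).2 (mem_openInterval.mp hu).1, add_sub_cancel_left]
    have hEuler : ∑ y ∈ openInterval x z,
        stepWt ρ (signedZeta ρ ζ) x y * (av - bv) * stepWt ρ ζ y z =
          -stepWt ρ ζ x z - stepWt ρ (signedZeta ρ ζ) x z := by
      rw [sum_congr rfl fun y hy => stepWt_mul_sub_mul_stepWt hρ _ _ (mem_openInterval.mp hy).1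
        (mem_openInterval.mp hy).2, ← sum_smul, sum_signedZeta_mul_openInterval hζ hE hxz,
        sub_smul, neg_smul]
      rfl
    have hab : ∑ y ∈ openInterval x z, stepWt ρ (signedZeta ρ ζ) x y * av * stepWt ρ ζ y z +
        ∑ u ∈ openInterval x z,
          (-stepWt ρ (signedZeta ρ ζ) x u - abIndex ρ ζ x u) * bv * stepWt ρ ζ u z =
        ∑ y ∈ openInterval x z, stepWt ρ (signedZeta ρ ζ) x y * (av - bv) * stepWt ρ ζ y z -
          ∑ u ∈ openInterval x z, abIndex ρ ζ x u * bv * stepWt ρ ζ u z := by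
      simp only [mul_sub, sub_mul, neg_mul, sum_sub_distrib, sum_neg_distrib]
      abel
    rw [hsplit, sum_congr rfl hIH, hab, hEuler, abIndex_of_lt ρ ζ hxz]
    abel

lemma two_smul_abIndex (hρ : StrictMono ρ) (hζ : ∀ x, ζ x x = 1) (hE : IsEulerian ρ ζ)
    {x z : α} (hxz : x < z) :
    (2 : ℚ) • abIndex ρ ζ x z =
      ζ x z • ((1 - (-1 : ℚ) ^ (ρ z - ρ x)) • (av - bv) ^ (ρ z - ρ x - 1)) +
        ∑ y ∈ openInterval x z, ζ x y • ((av - bv) ^ (ρ y - ρ x - 1) *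
          (bv - (-1 : ℚ) ^ (ρ y - ρ x) • av)) * abIndex ρ ζ y z := by
  have hsigned := eq_sub_of_add_eq (abIndex_add_sum_signed_eq_neg hρ hζ hE hxz)
  rw [two_smul]
  nth_rewrite 1 [abIndex_of_lt' ρ ζ hxz]
  rw [hsigned, ← neg_add', ← sub_eq_add_neg, add_sub_add_comm, ← sum_sub_distrib]
  congr 1
  · simp only [stepWt, signedZeta, smul_sub, sub_smul, one_smul, smul_smul, mul_comm]
  · refine sum_congr rfl fun y _ => ?_
    simp only [stepWt, signedZeta, sub_mul, mul_sub, smul_mul_assoc, smul_sub, mul_smul_comm,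
      smul_smul, mul_comm]

theorem abIndex_mem_cdSubalgebra (hρ : StrictMono ρ) (hζ : ∀ x, ζ x x = 1)
    (hE : IsEulerian ρ ζ) (x z : α) : abIndex ρ ζ x z ∈ cdSubalgebra := by
  induction x using WellFoundedGT.induction with
  | ind x ih =>
    by_cases hxz : x ≤ z
    · rcases hxz.eq_or_lt with rfl | hxz
      · rw [abIndex_self]
        exact one_mem _
      have htwo : (2 : ℚ) • abIndex ρ ζ x z ∈ cdSubalgebra := by
        rw [two_smul_abIndex hρ hζ hE hxz]
        refine add_mem (Subalgebra.smul_mem _ (one_sub_neg_one_pow_smul_mem_cdSubalgebra _) _)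
          (sum_mem fun y hy => mul_mem (Subalgebra.smul_mem _
            (sub_pow_pred_mul_mem_cdSubalgebra ?_) _) (ih y (mem_openInterval.mp hy).1))
        have := hρ (mem_openInterval.mp hy).1
        omega
      simpa using Subalgebra.smul_mem _ htwo (2⁻¹ : ℚ)
    · rw [abIndex_of_not_le ρ ζ hxz]
      exact zero_mem _

end Eulerian

/-- the ab-index of an Eulerian quasi-graded poset lies in the
subalgebra of `ℚ⟨a,b⟩` generated by `c = a+b` and `d = ab+ba` (the cd-index exists). -/
theorem cd_index_exists {α : Type*} [Fintype α] [PartialOrder α] [BoundedOrder α]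
    (ρ : α → ℕ) (ζ : α → α → ℚ) (hq : IsQuasiGraded ρ ζ) (hE : IsEulerian ρ ζ) :
    abIndex ρ ζ (⊥ : α) ⊤ ∈ Algebra.adjoin ℚ ({cvar, dvar} : Set QA) :=
  abIndex_mem_cdSubalgebra hq.1 hq.2.1 hE ⊥ ⊤
end
end
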